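/- arXiv:1912.12466 — 6 statements merged into one kernel-verified Lean document; each statement's English description precedes it below -/
import Mathlib

section
/- Let 𝒰 be the set of proper 3-colorings of C_{2m+1} (m ≥ 1) with colors in A = {1, w, w²} ⊂ ℂ. For u, v ∈ 𝒰 define M_{u,v} = ∏_{i=1}^{2m+1} (u_i - v_i)/(u_i - u_i*), where u_i* is the unique element of A \ {u_i, u_{i-1}} (indices mod 2m+1). Then M is antihermitian: M_{u,v} = -conj(M_{v,u}) for all u, v ∈ 𝒰. -/
open Complex Finset

/-- The matrix `M_{u,v} = ∏ᵢ (uᵢ - vᵢ)/(uᵢ - uᵢ*)`, indexed by proper 3-colorings of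
`C_{2m+1}` with colors in `A = {1, w, w²}`, is antihermitian: `M_{u,v} = -conj(M_{v,u})`. -/
theorem stmt5 (w : ℂ) (hw : w = Complex.exp (2 * Real.pi * I / 3))
    (m : ℕ) (hm : 1 ≤ m)
    (A : Finset ℂ) (hA : A = {1, w, w ^ 2})
    (u v : ZMod (2 * m + 1) → ℂ)
    (hu : ∀ i, u i ∈ A) (hv : ∀ i, v i ∈ A)
    (hup : ∀ i, u i ≠ u (i - 1)) (hvp : ∀ i, v i ≠ v (i - 1))
    (ustar vstar : ZMod (2 * m + 1) → ℂ)
    (hustar : ∀ i, ustar i ∈ A ∧ ustar i ≠ u i ∧ ustar i ≠ u (i - 1))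
    (hvstar : ∀ i, vstar i ∈ A ∧ vstar i ≠ v i ∧ vstar i ≠ v (i - 1)) :
    ∏ i, (u i - v i) / (u i - ustar i) =
      -starRingEnd ℂ (∏ i, (v i - u i) / (v i - vstar i)) := by
  haveI : NeZero (2 * m + 1) := ⟨Nat.succ_ne_zero _⟩
  have hw3 : w ^ 3 = 1 := by
    rw [hw, ← Complex.exp_nat_mul]
    rw [show ((3:ℕ):ℂ) * (2 * Real.pi * I / 3) = 2 * Real.pi * I by push_cast; ring]
    exact Complex.exp_two_pi_mul_I
  have hw1 : w ≠ 1 := by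
    rw [hw]
    intro h
    rw [Complex.exp_eq_one_iff] at h
    obtain ⟨n, hn⟩ := h
    have h0 : ((1:ℂ)/3 - n) * (2 * Real.pi * I) = 0 := by linear_combination hn
    rcases mul_eq_zero.mp h0 with h1 | h1
    · have h2 : ((3 * n : ℤ) : ℂ) = 1 := by push_cast; linear_combination (-3:ℂ) * h1
      have h3 : (3 * n : ℤ) = 1 := by exact_mod_cast h2
      omega
    · exact Complex.two_pi_I_ne_zero h1
  have hconjw : starRingEnd ℂ w = w ^ 2 := by
    have hinv : starRingEnd ℂ w = w⁻¹ := by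
      rw [hw, ← Complex.exp_conj, ← Complex.exp_neg]
      congr 1
      simp [map_div₀, Complex.conj_I, map_ofNat]
      ring
    rw [hinv]
    exact inv_eq_of_mul_eq_one_left (by linear_combination hw3)
  have hA0 : ∀ x ∈ A, x ^ 3 = 1 := by
    intro x hx
    rw [hA] at hx
    simp only [Finset.mem_insert, Finset.mem_singleton] at hx
    rcases hx with rfl | rfl | rfl
    · norm_num
    · exact hw3
    · linear_combination (w ^ 3 + 1) * hw3
  have hAne0 : ∀ x ∈ A, x ≠ 0 := by
    intro x hx h0
    have h1 := hA0 x hx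
    rw [h0] at h1
    norm_num at h1
  have hconjA : ∀ x ∈ A, starRingEnd ℂ x = x ^ 2 := by
    intro x hx
    rw [hA] at hx
    simp only [Finset.mem_insert, Finset.mem_singleton] at hx
    rcases hx with rfl | rfl | rfl
    · simp
    · exact hconjw
    · rw [map_pow, hconjw]
  have hR : ∀ x ∈ A, ∀ y ∈ A, x ≠ y → x ^ 2 + x * y + y ^ 2 = 0 := by
    intro x hx y hy hxy
    have h1 := hA0 x hx
    have h2 := hA0 y hy
    have h3 : (x - y) * (x ^ 2 + x * y + y ^ 2) = 0 := by linear_combination h1 - h2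
    rcases mul_eq_zero.mp h3 with h | h
    · exact absurd (sub_eq_zero.mp h) hxy
    · exact h
  have hsum3 : ∀ x ∈ A, ∀ y ∈ A, ∀ z ∈ A, x ≠ y → x ≠ z → y ≠ z → x + y + z = 0 := by
    intro x hx y hy z hz hxy hxz hyz
    have h1 := hR x hx y hy hxy
    have h2 := hR x hx z hz hxz
    have h3 : (y - z) * (x + y + z) = 0 := by linear_combination h1 - h2
    rcases mul_eq_zero.mp h3 with h | h
    · exact absurd (sub_eq_zero.mp h) hyz
    · exact h
  by_cases hc : ∃ i, u i = v i
  · obtain ⟨i, hi⟩ := hc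
    rw [Finset.prod_eq_zero (Finset.mem_univ i) (by rw [hi, sub_self, zero_div]),
        Finset.prod_eq_zero (Finset.mem_univ i) (by rw [hi, sub_self, zero_div])]
    simp
  · push_neg at hc
    have hkey : ∀ i : ZMod (2 * m + 1), (u i - v i) / (u i - ustar i)
        = -((u (i - 1) - v (i - 1)) / (u i - v i)) *
            starRingEnd ℂ ((v i - u i) / (v i - vstar i)) := by
      intro i
      obtain ⟨hcA, hcb, hca⟩ := hustar i
      obtain ⟨hc'A, hc'q, hc'p⟩ := hvstar i
      have hcEq : ustar i = -(u (i - 1)) - u i := by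
        have h := hsum3 (u (i - 1)) (hu _) (u i) (hu _) (ustar i) hcA
          (Ne.symm (hup i)) (Ne.symm hca) (Ne.symm hcb)
        linear_combination h
      have hc'Eq : vstar i = -(v (i - 1)) - v i := by
        have h := hsum3 (v (i - 1)) (hv _) (v i) (hv _) (vstar i) hc'A
          (Ne.symm (hvp i)) (Ne.symm hc'p) (Ne.symm hc'q)
        linear_combination h
      set a := u (i - 1) with ha
      set b := u i with hb
      set p := v (i - 1) with hp
      set q := v i with hq
      have R1 := hR b (hu i) a (hu _) (hup i)
      have R2 := hR q (hv i) p (hv _) (hvp i)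
      have R3 := hR b (hu i) q (hv i) (hc i)
      have R4 := hR a (hu _) p (hv _) (hc (i - 1))
      rw [map_div₀, map_sub, map_sub, hconjA q (hv i), hconjA (vstar i) hc'A, hconjA b (hu i)]
      rw [hcEq, hc'Eq]
      have d1 : b - (-a - b) ≠ 0 := by rw [← hcEq]; exact sub_ne_zero.mpr (Ne.symm hcb)
      have d2 : b - q ≠ 0 := sub_ne_zero.mpr (hc i)
      have d3 : q ^ 2 - (-p - q) ^ 2 ≠ 0 := by
        have h4 : q ^ 2 - (-p - q) ^ 2 = -p * (q - (-p - q)) := by ring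
        rw [h4, ← hc'Eq]
        exact mul_ne_zero (neg_ne_zero.mpr (hAne0 p (hv _))) (sub_ne_zero.mpr (Ne.symm hc'q))
      rw [← neg_div, div_mul_div_comm, div_eq_div_iff d1 (mul_ne_zero d2 d3)]
      linear_combination (2 * q ^ 2 - p * q - b ^ 2) * R1
        + (q ^ 2 - p * q + 2 * b * q - b ^ 2 - a * q) * R2
        + (-q ^ 2 - 2 * p * q - b * q + 2 * b * p + b ^ 2 + a * q + a * p - a * b) * R3
        + (-q ^ 2 + p * q) * R4
    have hshift : (∏ i, (u (i - 1) - v (i - 1))) = ∏ i, (u i - v i) :=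
      Fintype.prod_equiv (Equiv.subRight (1 : ZMod (2 * m + 1))) _ _ (fun i => rfl)
    have hPne : (∏ i, (u i - v i)) ≠ 0 :=
      Finset.prod_ne_zero_iff.mpr fun i _ => sub_ne_zero.mpr (hc i)
    have hodd : Odd (2 * m + 1) := ⟨m, by ring⟩
    have h1 : ∏ i, (u i - v i) / (u i - ustar i)
        = ∏ i, (-1 : ℂ) * (((u (i - 1) - v (i - 1)) / (u i - v i)) *
            starRingEnd ℂ ((v i - u i) / (v i - vstar i))) :=
      Finset.prod_congr rfl fun i _ => by rw [hkey i]; ring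
    rw [h1, Finset.prod_mul_distrib, Finset.prod_mul_distrib, Finset.prod_const,
      Finset.card_univ, ZMod.card, Finset.prod_div_distrib, ← map_prod, hshift,
      div_self hPne, Odd.neg_one_pow hodd]
    ring
end

section
/- With 𝒰 and M as above (M_{u,v} = ∏_i (u_i - v_i)/(u_i - u_i*) over proper 3-colorings of C_{2m+1}, m ≥ 1), the matrix M is non-zero: taking any proper coloring u ∈ 𝒰 and its cyclic shift v = (u_{2m+1}, u₁, …, u_{2m}), one has v ∈ 𝒰 and M_{u,v} ≠ 0. -/
open Complex Finset

/-- For a proper 3-coloring `u` of `C_{2m+1}` and its cyclic shift `v i = u (i-1)`,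
the shift `v` is again a proper coloring and the matrix entry
`M_{u,v} = ∏ᵢ (uᵢ - vᵢ)/(uᵢ - uᵢ*)` is non-zero. -/
theorem stmt6 (w : ℂ) (hw : w = Complex.exp (2 * Real.pi * I / 3))
    (m : ℕ) (hm : 1 ≤ m)
    (A : Finset ℂ) (hA : A = {1, w, w ^ 2})
    (u : ZMod (2 * m + 1) → ℂ)
    (hu : ∀ i, u i ∈ A)
    (hup : ∀ i, u i ≠ u (i - 1))
    (ustar : ZMod (2 * m + 1) → ℂ)
    (hustar : ∀ i, ustar i ∈ A ∧ ustar i ≠ u i ∧ ustar i ≠ u (i - 1))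
    (v : ZMod (2 * m + 1) → ℂ) (hvdef : ∀ i, v i = u (i - 1)) :
    (∀ i, v i ∈ A) ∧ (∀ i, v i ≠ v (i - 1)) ∧
      ∏ i, (u i - v i) / (u i - ustar i) ≠ 0 := by
  refine ⟨fun i => by rw [hvdef]; exact hu _, fun i => by rw [hvdef, hvdef]; exact hup (i-1), ?_⟩
  rw [Finset.prod_ne_zero_iff]
  intro i _
  refine div_ne_zero (sub_ne_zero.2 ?_) (sub_ne_zero.2 ?_)
  · rw [hvdef]; exact hup i
  · exact fun h => (hustar i).2.1 h.symm
end

section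
/- (Coefficient Formula) Let F be a field and f ∈ F[x₁,…,x_n] a polynomial of total degree at most t₁+⋯+t_n, where each t_i is a nonnegative integer. For each i let A_i ⊆ F with |A_i| = t_i + 1. Then the coefficient of x₁^{t₁}⋯x_n^{t_n} in f equals Σ_{(a₁,…,a_n) ∈ A₁×⋯×A_n} f(a₁,…,a_n) / N(a₁,…,a_n), where N(a₁,…,a_n) = ∏_{i=1}^n ∏_{b ∈ A_i \ {a_i}} (a_i - b). -/
open MvPolynomial Finset

lemma coeff_lagrange_basis {F : Type*} [Field F] [DecidableEq F]
    (A : Finset F) (a : F) (ha : a ∈ A) :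
    (Lagrange.basis A id a).coeff (A.card - 1) = (∏ b ∈ A.erase a, (a - b))⁻¹ := by
  have hinj : Set.InjOn id (A : Set F) := fun x _ y _ h => h
  have hnd := Lagrange.natDegree_basis hinj ha
  rw [← hnd, ← Polynomial.leadingCoeff, Lagrange.basis, Polynomial.leadingCoeff_prod,
    ← Finset.prod_inv_distrib]
  refine Finset.prod_congr rfl fun b _ => ?_
  rw [Lagrange.basisDivisor, Polynomial.leadingCoeff_mul, Polynomial.leadingCoeff_C,
    (Polynomial.monic_X_sub_C _).leadingCoeff, mul_one]
  rfl

lemma sum_pow_div_eq {F : Type*} [Field F] [DecidableEq F]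
    (A : Finset F) (t k : ℕ) (hA : A.card = t + 1) (hk : k ≤ t) :
    ∑ a ∈ A, a ^ k / ∏ b ∈ A.erase a, (a - b) = if k = t then 1 else 0 := by
  have hinj : Set.InjOn id (A : Set F) := fun x _ y _ h => h
  have hdeg : (Polynomial.X ^ k : Polynomial F).degree < A.card := by
    rw [Polynomial.degree_X_pow, hA]
    exact_mod_cast Nat.lt_succ_of_le hk
  have h := Lagrange.eq_interpolate hinj hdeg
  calc ∑ a ∈ A, a ^ k / ∏ b ∈ A.erase a, (a - b)
      = ∑ a ∈ A, Polynomial.eval (id a) (Polynomial.X ^ k : Polynomial F) *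
          (Lagrange.basis A id a).coeff t := by
        refine Finset.sum_congr rfl fun a ha => ?_
        have ht : t = A.card - 1 := by omega
        rw [ht, coeff_lagrange_basis A a ha]
        simp [div_eq_mul_inv]
    _ = (Polynomial.X ^ k : Polynomial F).coeff t := by
        conv_rhs => rw [h]
        rw [Lagrange.interpolate_apply, Polynomial.finset_sum_coeff]
        exact Finset.sum_congr rfl fun a _ => by rw [Polynomial.coeff_C_mul]
    _ = if k = t then 1 else 0 := by
        rw [Polynomial.coeff_X_pow]
        simp [eq_comm]

/-- Coefficient formula: if `deg f ≤ t₁ + ⋯ + t_n` and `|A_i| = t_i + 1`, then the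
coefficient of `x₁^{t₁}⋯x_n^{t_n}` in `f` equals
`Σ_{a ∈ A₁ × ⋯ × A_n} f(a) / ∏ᵢ ∏_{b ∈ A_i \ {a_i}} (a_i - b)`. -/
theorem stmt9 (F : Type*) [Field F] [DecidableEq F] (n : ℕ)
    (f : MvPolynomial (Fin n) F) (t : Fin n → ℕ)
    (hdeg : f.totalDegree ≤ ∑ i, t i)
    (A : Fin n → Finset F) (hA : ∀ i, (A i).card = t i + 1) :
    f.coeff (Finsupp.equivFunOnFinite.symm t) =
      ∑ a ∈ Fintype.piFinset A,
        eval a f / ∏ i, ∏ b ∈ (A i).erase (a i), (a i - b) := by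
  classical
  set T : Fin n →₀ ℕ := Finsupp.equivFunOnFinite.symm t with hT
  have hTa : ∀ i, T i = t i := fun i => rfl
  have key : ∀ a ∈ Fintype.piFinset A,
      eval a f / ∏ i, ∏ b ∈ (A i).erase (a i), (a i - b)
      = ∑ d ∈ f.support, f.coeff d *
          ∏ i, ((a i) ^ d i / ∏ b ∈ (A i).erase (a i), (a i - b)) := by
    intro a _
    rw [eval_eq', Finset.sum_div]
    refine Finset.sum_congr rfl fun d _ => ?_
    rw [mul_div_assoc, ← Finset.prod_div_distrib]
  rw [Finset.sum_congr rfl key, Finset.sum_comm]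
  have step : ∀ d ∈ f.support,
      ∑ a ∈ Fintype.piFinset A, f.coeff d *
          ∏ i, ((a i) ^ d i / ∏ b ∈ (A i).erase (a i), (a i - b))
      = f.coeff d * (if d = T then 1 else 0) := by
    intro d hd
    rw [← Finset.mul_sum]
    have hps := Finset.prod_univ_sum A
      (fun i x => x ^ d i / ∏ b ∈ (A i).erase x, (x - b))
    rw [← hps]
    congr 1
    by_cases hdT : d = T
    · subst hdT
      rw [if_pos rfl]
      refine Finset.prod_eq_one fun i _ => ?_
      rw [hTa i, sum_pow_div_eq (A i) (t i) (t i) (hA i) le_rfl, if_pos rfl]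
    · rw [if_neg hdT]
      have hsum : ∑ i, d i ≤ ∑ i, t i := by
        refine le_trans ?_ hdeg
        have := MvPolynomial.le_totalDegree hd
        rwa [Finsupp.sum_fintype _ _ (fun _ => rfl)] at this
      have hex : ∃ j, d j < t j := by
        by_contra hc
        push_neg at hc
        have : ∀ i ∈ Finset.univ, d i = t i := by
          intro i _
          have h1 : ∑ i, t i ≤ ∑ i, d i := Finset.sum_le_sum fun i _ => hc i
          have h2 : ∑ i, d i = ∑ i, t i := le_antisymm hsum h1
          by_contra hne
          have : t i < d i := lt_of_le_of_ne (hc i) (Ne.symm hne)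
          have := Finset.sum_lt_sum (fun j _ => hc j) ⟨i, Finset.mem_univ i, this⟩
          omega
        exact hdT (Finsupp.ext fun i => by rw [hTa i]; exact this i (Finset.mem_univ i))
      obtain ⟨j, hj⟩ := hex
      refine Finset.prod_eq_zero (Finset.mem_univ j) ?_
      rw [sum_pow_div_eq (A j) (t j) (d j) (hA j) hj.le, if_neg hj.ne]
  rw [Finset.sum_congr rfl step]
  simp only [mul_ite, mul_one, mul_zero, Finset.sum_ite_eq' f.support T (fun d => f.coeff d)]
  by_cases hT' : T ∈ f.support
  · rw [if_pos hT']
  · rw [if_neg hT', MvPolynomial.notMem_support_iff.mp hT']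
end

section
/- For m, n ≥ 1, let G = T_{2m+1,2n+1} = C_{2m+1} □ C_{2n+1} be the toroidal grid on N = (2m+1)(2n+1) vertices. Then the coefficient of ∏_{i=1}^N x_i² in the graph polynomial f_G(x₁,…,x_N) is zero. -/
open MvPolynomial Finset SimpleGraph

instance {α β : Type*} [DecidableEq α] [DecidableEq β] (G : SimpleGraph α)
    (H : SimpleGraph β) [DecidableRel G.Adj] [DecidableRel H.Adj] :
    DecidableRel (G □ H).Adj := fun x y =>
  decidable_of_iff ((G.Adj x.1 y.1 ∧ x.2 = y.2) ∨ H.Adj x.2 y.2 ∧ x.1 = y.1)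
    SimpleGraph.boxProd_adj.symm

/-- The graph polynomial `∏_{i<j, ij ∈ E} (x_i - x_j)` of a graph `G`, with respect to
a chosen ordering `lt` of the vertices. -/
noncomputable def graphPoly (F : Type*) [CommRing F] {V : Type*} [Fintype V]
    (G : SimpleGraph V) [DecidableRel G.Adj] (lt : V → V → Prop) [DecidableRel lt] :
    MvPolynomial V F :=
  ∏ p ∈ Finset.univ.filter (fun p : V × V => lt p.1 p.2 ∧ G.Adj p.1 p.2),
    (X p.1 - X p.2)

/-- Renaming a graph polynomial along a graph automorphism changes it only by a sign,
the sign being `(-1)` to the number of edges whose orientation is reversed. -/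
lemma rename_graphPoly {V : Type*} [Fintype V] [DecidableEq V]
    (G : SimpleGraph V) [DecidableRel G.Adj]
    (lt : V → V → Prop) [DecidableRel lt]
    (htri : ∀ a b : V, a ≠ b → (lt a b ↔ ¬ lt b a))
    (σ : V ≃ V) (hσ : ∀ a b, G.Adj (σ a) (σ b) ↔ G.Adj a b) :
    MvPolynomial.rename σ (graphPoly ℂ G lt) =
      (-1 : MvPolynomial V ℂ) ^ (Finset.univ.filter (fun p : V × V =>
          (lt p.1 p.2 ∧ G.Adj p.1 p.2) ∧ ¬ lt (σ p.1) (σ p.2))).card *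
        graphPoly ℂ G lt := by
  classical
  set S := Finset.univ.filter (fun p : V × V => lt p.1 p.2 ∧ G.Adj p.1 p.2) with hS
  have hmem : ∀ p : V × V, p ∈ S ↔ lt p.1 p.2 ∧ G.Adj p.1 p.2 := by
    intro p; simp [hS]
  set t : V × V → V × V := fun p =>
    if lt (σ p.1) (σ p.2) then (σ p.1, σ p.2) else (σ p.2, σ p.1) with ht
  set t' : V × V → V × V := fun p =>
    if lt (σ.symm p.1) (σ.symm p.2) then (σ.symm p.1, σ.symm p.2)
      else (σ.symm p.2, σ.symm p.1) with ht'
  have hrename : MvPolynomial.rename σ (graphPoly ℂ G lt)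
      = ∏ p ∈ S, ((X (σ p.1) - X (σ p.2)) : MvPolynomial V ℂ) := by
    rw [graphPoly, map_prod]
    exact Finset.prod_congr rfl fun p _ => by rw [map_sub, rename_X, rename_X]
  have step1 : ∀ p ∈ S, ((X (σ p.1) - X (σ p.2)) : MvPolynomial V ℂ)
      = (if lt (σ p.1) (σ p.2) then 1 else -1) * (X (t p).1 - X (t p).2) := by
    intro p hp
    by_cases h : lt (σ p.1) (σ p.2) <;> simp only [ht, if_pos, if_neg, h, if_true,
      if_false] <;> ring
  have step2 : ∏ p ∈ S, ((X (σ p.1) - X (σ p.2)) : MvPolynomial V ℂ)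
      = (∏ p ∈ S, (if lt (σ p.1) (σ p.2) then (1 : MvPolynomial V ℂ) else -1)) *
        ∏ p ∈ S, (X (t p).1 - X (t p).2) := by
    rw [← Finset.prod_mul_distrib]
    exact Finset.prod_congr rfl step1
  have hsign : (∏ p ∈ S, (if lt (σ p.1) (σ p.2) then (1 : MvPolynomial V ℂ) else -1))
      = (-1) ^ (Finset.univ.filter (fun p : V × V =>
          (lt p.1 p.2 ∧ G.Adj p.1 p.2) ∧ ¬ lt (σ p.1) (σ p.2))).card := by
    rw [Finset.prod_ite, Finset.prod_const_one, one_mul, Finset.prod_const]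
    congr 1
    rw [hS, Finset.filter_filter]
  have hmapsto : ∀ p ∈ S, t p ∈ S := by
    intro p hp
    rw [hmem] at hp ⊢
    have hne : σ p.1 ≠ σ p.2 := fun h => (G.ne_of_adj hp.2) (σ.injective h)
    by_cases h : lt (σ p.1) (σ p.2)
    · simp only [ht, if_pos h]
      exact ⟨h, (hσ _ _).2 hp.2⟩
    · simp only [ht, if_neg h]
      exact ⟨(htri _ _ hne.symm).2 h, (hσ _ _).2 hp.2.symm⟩
  have hmapsto' : ∀ p ∈ S, t' p ∈ S := by
    intro p hp
    rw [hmem] at hp ⊢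
    have hadj : G.Adj (σ.symm p.1) (σ.symm p.2) := by
      rw [← hσ, σ.apply_symm_apply, σ.apply_symm_apply]; exact hp.2
    have hne : σ.symm p.1 ≠ σ.symm p.2 := G.ne_of_adj hadj
    by_cases h : lt (σ.symm p.1) (σ.symm p.2)
    · simp only [ht', if_pos h]
      exact ⟨h, hadj⟩
    · simp only [ht', if_neg h]
      exact ⟨(htri _ _ hne.symm).2 h, hadj.symm⟩
  have hleft : ∀ p ∈ S, t' (t p) = p := by
    intro p hp
    rw [hmem] at hp
    have hne : p.1 ≠ p.2 := G.ne_of_adj hp.2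
    by_cases h : lt (σ p.1) (σ p.2)
    · simp only [ht, ht', if_pos h, σ.symm_apply_apply, if_pos hp.1]
    · have hneg : ¬ lt p.2 p.1 := (htri _ _ hne).1 hp.1
      simp only [ht, ht', if_neg h, σ.symm_apply_apply, if_neg hneg]
  have hright : ∀ p ∈ S, t (t' p) = p := by
    intro p hp
    rw [hmem] at hp
    have hne : p.1 ≠ p.2 := G.ne_of_adj hp.2
    by_cases h : lt (σ.symm p.1) (σ.symm p.2)
    · simp only [ht, ht', if_pos h, σ.apply_symm_apply, if_pos hp.1]
    · have hneg : ¬ lt p.2 p.1 := (htri _ _ hne).1 hp.1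
      simp only [ht, ht', if_neg h, σ.apply_symm_apply, if_neg hneg]
  have hreindex : ∏ p ∈ S, ((X (t p).1 - X (t p).2) : MvPolynomial V ℂ)
      = ∏ p ∈ S, ((X p.1 - X p.2) : MvPolynomial V ℂ) := by
    exact Finset.prod_nbij' t t' hmapsto hmapsto' hleft hright (fun a _ => rfl)
  rw [hrename, step2, hsign, hreindex, graphPoly]

lemma cyc_neg_adj {k : ℕ} (u v : Fin (k + 1)) :
    (cycleGraph (k + 1)).Adj (-u) (-v) ↔ (cycleGraph (k + 1)).Adj u v := by
  simp only [cycleGraph_adj', neg_sub_neg]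
  tauto

/-- For `m, n ≥ 1`, the coefficient of `∏ x_i^2` in the graph polynomial of the
toroidal grid `T_{2m+1,2n+1} = C_{2m+1} □ C_{2n+1}` is zero. -/
theorem stmt12 (m n : ℕ) (hm : 1 ≤ m) (hn : 1 ≤ n) :
    MvPolynomial.coeff (Finsupp.equivFunOnFinite.symm fun _ => 2)
        (graphPoly ℂ (cycleGraph (2 * m + 1) □ cycleGraph (2 * n + 1))
          (fun p q => p.2 < q.2 ∨ (p.2 = q.2 ∧ p.1 < q.1))) = 0 := by
  classical
  set V := Fin (2 * m + 1) × Fin (2 * n + 1) with hV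
  set G := cycleGraph (2 * m + 1) □ cycleGraph (2 * n + 1) with hG
  set lt : V → V → Prop := fun p q => p.2 < q.2 ∨ (p.2 = q.2 ∧ p.1 < q.1) with hlt
  set σ : V ≃ V := Equiv.prodCongr (Equiv.refl (Fin (2 * m + 1)))
    (Equiv.neg (Fin (2 * n + 1))) with hσdef
  have hσap : ∀ p : V, σ p = (p.1, -p.2) := fun p => rfl
  have htri : ∀ a b : V, a ≠ b → (lt a b ↔ ¬ lt b a) := by
    intro a b hab
    have h : ¬(a.2.val = b.2.val ∧ a.1.val = b.1.val) := by
      intro h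
      exact hab (Prod.ext (Fin.ext h.2) (Fin.ext h.1))
    simp only [hlt, Fin.lt_def, Fin.ext_iff]
    omega
  have hσadj : ∀ a b : V, G.Adj (σ a) (σ b) ↔ G.Adj a b := by
    intro a b
    simp only [hG, boxProd_adj, hσap, neg_inj]
    constructor
    · rintro (⟨h1, h2⟩ | ⟨h1, h2⟩)
      · exact Or.inl ⟨h1, h2⟩
      · exact Or.inr ⟨(cyc_neg_adj a.2 b.2).1 h1, h2⟩
    · rintro (⟨h1, h2⟩ | ⟨h1, h2⟩)
      · exact Or.inl ⟨h1, h2⟩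
      · exact Or.inr ⟨(cyc_neg_adj a.2 b.2).2 h1, h2⟩
  -- characterize the set of flipped edges
  set B := Finset.univ.filter (fun p : V × V =>
      (lt p.1 p.2 ∧ G.Adj p.1 p.2) ∧ ¬ lt (σ p.1) (σ p.2)) with hB
  have hchar : ∀ p : V × V, p ∈ B ↔
      (p.1.1 = p.2.1 ∧ 1 ≤ p.1.2.val ∧ p.1.2.val ≤ 2 * n - 1 ∧
        p.2.2.val = p.1.2.val + 1) := by
    rintro ⟨⟨a, b⟩, ⟨c, d⟩⟩
    simp only [hB, Finset.mem_filter, Finset.mem_univ, true_and, hlt, hG, hσap,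
      boxProd_adj, cycleGraph_adj', Fin.lt_def, Fin.ext_iff, Fin.sub_def, Fin.neg_def]
    have hb := b.isLt
    have hd := d.isLt
    have key : ∀ x : ℕ, x < 2 * (2 * n + 1) →
        (x < 2 * n + 1 ∧ x % (2 * n + 1) = x) ∨
        (2 * n + 1 ≤ x ∧ x % (2 * n + 1) + (2 * n + 1) = x) := by
      intro x hx
      rcases Nat.lt_or_ge x (2 * n + 1) with h | h
      · exact Or.inl ⟨h, Nat.mod_eq_of_lt h⟩
      · refine Or.inr ⟨h, ?_⟩
        rw [Nat.mod_eq_sub_mod h, Nat.mod_eq_of_lt (by omega)]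
        omega
    have e1 := key (2 * n + 1 - d.val + b.val) (by omega)
    have e2 := key (2 * n + 1 - b.val + d.val) (by omega)
    have e3 := key (2 * n + 1 - b.val) (by omega)
    have e4 := key (2 * n + 1 - d.val) (by omega)
    generalize (2 * n + 1 - d.val + b.val) % (2 * n + 1) = q1 at e1 ⊢
    generalize (2 * n + 1 - b.val + d.val) % (2 * n + 1) = q2 at e2 ⊢
    generalize (2 * n + 1 - b.val) % (2 * n + 1) = q3 at e3 ⊢
    generalize (2 * n + 1 - d.val) % (2 * n + 1) = q4 at e4 ⊢
    generalize (2 * m + 1 - c.val + a.val) % (2 * m + 1) = q5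
    generalize (2 * m + 1 - a.val + c.val) % (2 * m + 1) = q6
    omega
  -- count the flipped edges
  have hcard : B.card = (2 * m + 1) * (2 * n - 1) := by
    have : B.card = (Finset.univ : Finset (Fin (2 * m + 1) × Fin (2 * n - 1))).card := by
      refine Finset.card_bij'
        (i := fun p hp => (p.1.1, ⟨p.1.2.val - 1, by
          have := (hchar p).1 hp; omega⟩))
        (j := fun q _ => ((q.1, ⟨q.2.val + 1, by have := q.2.isLt; omega⟩),
          (q.1, ⟨q.2.val + 2, by have := q.2.isLt; omega⟩)))
        (fun p hp => Finset.mem_univ _) ?_ ?_ ?_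
      · intro q _
        rw [hchar]
        have hq := q.2.isLt
        refine ⟨rfl, ?_, ?_, ?_⟩
        · show 1 ≤ q.2.val + 1; omega
        · show q.2.val + 1 ≤ 2 * n - 1; omega
        · show q.2.val + 2 = q.2.val + 1 + 1; omega
      · intro p hp
        obtain ⟨h1, h2, h3, h4⟩ := (hchar p).1 hp
        refine Prod.ext (Prod.ext rfl (Fin.ext ?_)) (Prod.ext h1 (Fin.ext ?_))
        · show p.1.2.val - 1 + 1 = p.1.2.val; omega
        · show p.1.2.val - 1 + 2 = p.2.2.val; omega
      · intro q _
        refine Prod.ext rfl (Fin.ext ?_)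
        show q.2.val + 1 - 1 = q.2.val; omega
    rw [this, Finset.card_univ, Fintype.card_prod, Fintype.card_fin, Fintype.card_fin]
  have hodd : Odd B.card := by
    rw [hcard]
    exact Odd.mul ⟨m, by ring⟩ ⟨n - 1, by omega⟩
  -- now the sign argument
  set d : V →₀ ℕ := Finsupp.equivFunOnFinite.symm fun _ => 2 with hd
  have hmapdom : Finsupp.mapDomain σ d = d := by
    rw [← Finsupp.equivMapDomain_eq_mapDomain]
    ext a
    simp [hd]
  have h2 := MvPolynomial.coeff_rename_mapDomain σ σ.injective (graphPoly ℂ G lt) d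
  rw [hmapdom, rename_graphPoly G lt htri σ hσadj, ← hB, hodd.neg_one_pow,
    neg_one_mul, MvPolynomial.coeff_neg] at h2
  have h3 : (2 : ℂ) * MvPolynomial.coeff d (graphPoly ℂ G lt) = 0 := by
    linear_combination -h2
  have h4 := (mul_eq_zero.mp h3).resolve_left two_ne_zero
  exact h4
end

section
/- For m ≥ 1 and n ≥ 2, the Alon–Tarsi number of the toroidal grid T_{2m+1,2n} = C_{2m+1} □ C_{2n} equals 3; that is, the graph polynomial f_G contains a monomial with non-zero coefficient in which every variable has exponent at most 2, and no such monomial exists with all exponents at most 1. -/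
open MvPolynomial Finset SimpleGraph Matrix

noncomputable def omg : ℂ := (-1 + Real.sqrt 3 * Complex.I) / 2

lemma omg_rel : omg ^ 2 + omg + 1 = 0 := by
  have h : ((Real.sqrt 3 : ℝ) : ℂ) ^ 2 = 3 := by
    norm_cast
    rw [Real.sq_sqrt] <;> norm_num
  have hI : (Complex.I) ^ 2 = -1 := Complex.I_sq
  unfold omg
  linear_combination (Complex.I ^ 2 / 4) * h + (3/4 : ℂ) * hI

lemma omg3 : omg ^ 3 = 1 := by
  linear_combination (omg - 1) * omg_rel

noncomputable def tht : ℂ := 2 * omg + 1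

lemma tht_sq : tht ^ 2 = -3 := by
  unfold tht; linear_combination 4 * omg_rel

lemma tht_ne : tht ≠ 0 := by
  intro h
  have := tht_sq
  rw [h] at this
  norm_num at this

def chiz : ZMod 3 → ℤ := fun d => if d = 0 then 0 else if d = 1 then -1 else 1

def sgm : ZMod 3 → ℤ := fun u => if u = 2 then -1 else 1

lemma chiz_neg : ∀ d : ZMod 3, chiz (-d) = - chiz d := by decide

lemma chiz_ne_zero : ∀ d : ZMod 3, d ≠ 0 → chiz d ≠ 0 := by decide

lemma chi_quad : ∀ a b c d : ZMod 3, a ≠ b → c ≠ d → a ≠ c → b ≠ d →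
    chiz (c - d) = chiz (a - b) * sgm (a - c) * sgm (b - d) := by decide

lemma sgm_sq : ∀ u : ZMod 3, sgm u * sgm u = 1 := by decide

noncomputable def omz : ZMod 3 → ℂ := fun a => omg ^ a.val

lemma omg_pow_mod (j : ℕ) : omg ^ j = omg ^ (j % 3) := by
  conv_lhs => rw [← Nat.div_add_mod j 3]
  rw [pow_add, pow_mul, omg3, one_pow, one_mul]

lemma omz_add (a b : ZMod 3) : omz (a + b) = omz a * omz b := by
  unfold omz
  rw [← pow_add, ZMod.val_add, ← omg_pow_mod]

lemma omz_zero : omz 0 = 1 := by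
  unfold omz
  norm_num

lemma omz_sum {α : Type*} (s : Finset α) (g : α → ZMod 3) :
    omz (∑ e ∈ s, g e) = ∏ e ∈ s, omz (g e) := by
  classical
  induction s using Finset.cons_induction with
  | empty => simp [omz_zero]
  | cons a s ha ih => rw [Finset.sum_cons, Finset.prod_cons, omz_add, ih]

lemma omz_pow (a : ZMod 3) (e : ℕ) : omz a ^ e = omz (a * (e : ZMod 3)) := by
  unfold omz
  rw [← pow_mul, ZMod.val_mul, ← omg_pow_mod, ZMod.val_natCast]
  rw [omg_pow_mod (a.val * e), omg_pow_mod (a.val * (e % 3))]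
  congr 1
  rw [Nat.mul_mod, Nat.mul_mod a.val (e % 3)]
  have : e % 3 % 3 = e % 3 := by omega
  rw [this]

lemma univ_zmod3 : (univ : Finset (ZMod 3)) = {0, 1, 2} := by decide

lemma omz_one_val : omz 1 = omg := by
  unfold omz
  norm_num [ZMod.val_one]

lemma omz_two_val : omz 2 = omg ^ 2 := by
  have : (2 : ZMod 3).val = 2 := rfl
  unfold omz
  rw [this]

lemma sum_omz : ∑ a : ZMod 3, omz a = 0 := by
  rw [univ_zmod3]
  rw [Finset.sum_insert (by decide), Finset.sum_insert (by decide), Finset.sum_singleton]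
  rw [omz_zero, omz_one_val, omz_two_val]
  linear_combination omg_rel

lemma sum_omz_pow (e : ℕ) : ∑ a : ZMod 3, omz a ^ e = if (3:ℕ) ∣ e then 3 else 0 := by
  simp_rw [omz_pow]
  have hcast : ((3:ℕ) ∣ e) ↔ ((e : ZMod 3) = 0) := by
    rw [ZMod.natCast_eq_zero_iff]
  rcases (show ∀ x : ZMod 3, x = 0 ∨ x = 1 ∨ x = 2 from by decide) (e : ZMod 3) with h | h | h
  · rw [if_pos (hcast.mpr h), h]
    simp only [mul_zero, omz_zero]
    rw [Finset.sum_const]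
    simp [ZMod.card]
  · rw [if_neg (by rw [hcast, h]; decide), h]
    simp only [mul_one]
    exact sum_omz
  · rw [if_neg (by rw [hcast, h]; decide), h]
    rw [univ_zmod3]
    rw [Finset.sum_insert (by decide), Finset.sum_insert (by decide), Finset.sum_singleton]
    rw [show ((0:ZMod 3) * 2) = 0 from by decide, show ((1:ZMod 3) * 2) = 2 from by decide,
      show ((2:ZMod 3) * 2) = 1 from by decide, omz_zero, omz_one_val, omz_two_val]
    linear_combination omg_rel

lemma chiz_zero_val : chiz 0 = 0 := by decide
lemma chiz_one_val : chiz 1 = -1 := by decide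
lemma chiz_two_val : chiz 2 = 1 := by decide

lemma omz_sub_eq (a b : ZMod 3) : omz a - omz b = tht * (chiz (a - b) : ℂ) * omz (-(a + b)) := by
  have trich := (show ∀ x : ZMod 3, x = 0 ∨ x = 1 ∨ x = 2 from by decide)
  unfold tht
  rcases trich a with ha | ha | ha <;> rcases trich b with hb | hb | hb <;> subst ha hb
  · rw [show ((0:ZMod 3) - 0) = 0 from by decide, chiz_zero_val]; push_cast; ring
  · rw [show ((0:ZMod 3) - 1) = 2 from by decide, show (-(0+1) : ZMod 3) = 2 from by decide,
      chiz_two_val, omz_zero, omz_one_val, omz_two_val]; push_cast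
    linear_combination (1 - 2*omg) * omg_rel
  · rw [show ((0:ZMod 3) - 2) = 1 from by decide, show (-(0+2) : ZMod 3) = 1 from by decide,
      chiz_one_val, omz_zero, omz_one_val, omz_two_val]; push_cast
    linear_combination (1 : ℂ) * omg_rel
  · rw [show ((1:ZMod 3) - 0) = 1 from by decide, show (-(1+0) : ZMod 3) = 2 from by decide,
      chiz_one_val, omz_zero, omz_one_val, omz_two_val]; push_cast
    linear_combination (-1 + 2*omg) * omg_rel
  · rw [show ((1:ZMod 3) - 1) = 0 from by decide, chiz_zero_val]; push_cast; ring
  · rw [show ((1:ZMod 3) - 2) = 2 from by decide, show (-(1+2) : ZMod 3) = 0 from by decide,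
      chiz_two_val, omz_zero, omz_one_val, omz_two_val]; push_cast
    linear_combination (-1 : ℂ) * omg_rel
  · rw [show ((2:ZMod 3) - 0) = 2 from by decide, show (-(2+0) : ZMod 3) = 1 from by decide,
      chiz_two_val, omz_zero, omz_one_val, omz_two_val]; push_cast
    linear_combination (-1 : ℂ) * omg_rel
  · rw [show ((2:ZMod 3) - 1) = 1 from by decide, show (-(2+1) : ZMod 3) = 0 from by decide,
      chiz_one_val, omz_zero, omz_one_val, omz_two_val]; push_cast
    linear_combination (1 : ℂ) * omg_rel
  · rw [show ((2:ZMod 3) - 2) = 0 from by decide, chiz_zero_val]; push_cast; ring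

section MatrixLemmas

variable {ι : Type*} [Fintype ι] [DecidableEq ι] {R : Type*} [CommRing R]

lemma chain_pow (A : Matrix ι ι R) : ∀ (k : ℕ) (a b : ι), (A ^ k) a b =
    ∑ F : Fin k → ι, if (Fin.cons a F : Fin (k+1) → ι) (Fin.last k) = b then
      (∏ j : Fin k, A ((Fin.cons a F : Fin (k+1) → ι) j.castSucc)
        ((Fin.cons a F : Fin (k+1) → ι) j.succ)) else 0 := by
  intro k
  induction k with
  | zero =>
    intro a b
    have h1 : ∀ F : Fin 0 → ι, (Fin.cons a F : Fin 1 → ι) (Fin.last 0) = a := fun F => rfl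
    simp only [pow_zero, Matrix.one_apply, h1]
    simp
  | succ k ih =>
    intro a b
    rw [pow_succ', Matrix.mul_apply]
    have step := Fintype.sum_equiv (Fin.consEquiv (fun _ : Fin (k+1) => ι))
      (fun y : ι × (Fin k → ι) =>
        if (Fin.cons a (Fin.cons y.1 y.2) : Fin (k+2) → ι) (Fin.last (k+1)) = b then
          (∏ j : Fin (k+1), A ((Fin.cons a (Fin.cons y.1 y.2) : Fin (k+2) → ι) j.castSucc)
            ((Fin.cons a (Fin.cons y.1 y.2) : Fin (k+2) → ι) j.succ)) else 0)
      (fun F : Fin (k+1) → ι =>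
        if (Fin.cons a F : Fin (k+2) → ι) (Fin.last (k+1)) = b then
          (∏ j : Fin (k+1), A ((Fin.cons a F : Fin (k+2) → ι) j.castSucc)
            ((Fin.cons a F : Fin (k+2) → ι) j.succ)) else 0)
      (fun y => rfl)
    rw [← step, Fintype.sum_prod_type]
    refine Finset.sum_congr rfl fun c _ => ?_
    rw [ih c b, Finset.mul_sum]
    refine Finset.sum_congr rfl fun F _ => ?_
    have hlast : (Fin.cons a (Fin.cons c F) : Fin (k+2) → ι) (Fin.last (k+1))
        = (Fin.cons c F : Fin (k+1) → ι) (Fin.last k) := by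
      rw [← Fin.succ_last, Fin.cons_succ]
    rw [hlast]
    have hprod : (∏ j : Fin (k+1), A ((Fin.cons a (Fin.cons c F) : Fin (k+2) → ι) j.castSucc)
        ((Fin.cons a (Fin.cons c F) : Fin (k+2) → ι) j.succ))
        = A a c * ∏ j : Fin k, A ((Fin.cons c F : Fin (k+1) → ι) j.castSucc)
          ((Fin.cons c F : Fin (k+1) → ι) j.succ) := by
      rw [Fin.prod_univ_succ]
      simp only [Fin.castSucc_zero, Fin.cons_zero, Fin.cons_succ, ← Fin.succ_castSucc]
    rw [hprod, mul_ite, mul_zero]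

lemma cyc_trace (A : Matrix ι ι R) (k : ℕ) :
    ∑ G : Fin (k+1) → ι, ∏ j : Fin (k+1), A (G j) (G (j + 1)) = (A ^ (k+1)).trace := by
  have tr : (A ^ (k+1)).trace = ∑ a : ι, ∑ F : Fin k → ι,
      (∏ j : Fin k, A ((Fin.cons a F : Fin (k+1) → ι) j.castSucc)
        ((Fin.cons a F : Fin (k+1) → ι) j.succ))
        * A ((Fin.cons a F : Fin (k+1) → ι) (Fin.last k)) a := by
    rw [Matrix.trace]
    refine Finset.sum_congr rfl fun a _ => ?_
    rw [Matrix.diag_apply, pow_succ, Matrix.mul_apply]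
    have hb : ∀ b : ι, (A ^ k) a b * A b a = ∑ F : Fin k → ι,
        (if (Fin.cons a F : Fin (k+1) → ι) (Fin.last k) = b then
          (∏ j : Fin k, A ((Fin.cons a F : Fin (k+1) → ι) j.castSucc)
            ((Fin.cons a F : Fin (k+1) → ι) j.succ)) else 0) * A b a := by
      intro b; rw [chain_pow A k a b, Finset.sum_mul]
    simp_rw [hb]
    rw [Finset.sum_comm]
    refine Finset.sum_congr rfl fun F _ => ?_
    simp_rw [ite_mul, zero_mul]
    rw [Finset.sum_ite_eq univ ((Fin.cons a F : Fin (k+1) → ι) (Fin.last k))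
      (fun b => (∏ j : Fin k, A ((Fin.cons a F : Fin (k+1) → ι) j.castSucc)
            ((Fin.cons a F : Fin (k+1) → ι) j.succ)) * A b a)]
    simp
  rw [tr]
  have key : ∀ y : ι × (Fin k → ι),
      (∏ j : Fin (k+1), A ((Fin.cons y.1 y.2 : Fin (k+1) → ι) j)
          ((Fin.cons y.1 y.2 : Fin (k+1) → ι) (j + 1)))
      = (∏ j : Fin k, A ((Fin.cons y.1 y.2 : Fin (k+1) → ι) j.castSucc)
        ((Fin.cons y.1 y.2 : Fin (k+1) → ι) j.succ))
        * A ((Fin.cons y.1 y.2 : Fin (k+1) → ι) (Fin.last k)) y.1 := by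
    rintro ⟨a, F⟩
    set G : Fin (k+1) → ι := (Fin.cons a F : Fin (k+1) → ι) with hG
    rw [Fin.prod_univ_castSucc (fun j : Fin (k+1) => A (G j) (G (j+1)))]
    congr 1
    · refine Finset.prod_congr rfl fun j _ => ?_
      congr 1
      rw [Fin.coeSucc_eq_succ]
    · congr 1
      rw [Fin.last_add_one, hG, Fin.cons_zero]
  have main := Fintype.sum_equiv (Fin.consEquiv (fun _ : Fin (k+1) => ι))
    (fun y : ι × (Fin k → ι) =>
      ∏ j : Fin (k+1), A ((Fin.cons y.1 y.2 : Fin (k+1) → ι) j)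
          ((Fin.cons y.1 y.2 : Fin (k+1) → ι) (j + 1)))
    (fun G : Fin (k+1) → ι => ∏ j : Fin (k+1), A (G j) (G (j + 1)))
    (fun y => rfl)
  rw [← main, Fintype.sum_prod_type]
  exact Finset.sum_congr rfl fun a _ => Finset.sum_congr rfl fun F _ => key (a, F)

lemma trace_split (A : Matrix ι ι ℤ) (hA : Aᵀ = -A) (k : ℕ) :
    (A ^ (2*k)).trace = (-1)^k * ∑ a : ι, ∑ b : ι, ((A ^ k) a b)^2 := by
  have h2 : (2*k) = k + k := by ring
  rw [h2, pow_add, Matrix.trace]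
  have hT : ∀ a b : ι, (A ^ k) b a = (-1)^k * (A ^ k) a b := by
    intro a b
    have h1 : (A ^ k) b a = ((A ^ k)ᵀ) a b := rfl
    rw [h1, Matrix.transpose_pow, hA]
    have hs : (-A) ^ k = ((-1 : ℤ) ^ k) • (A ^ k) := by
      rw [show (-A) = (-1 : ℤ) • A from by simp, smul_pow]
    rw [hs]
    simp
  rw [Finset.mul_sum]
  refine Finset.sum_congr rfl fun a _ => ?_
  rw [Matrix.diag_apply, Matrix.mul_apply, Finset.mul_sum]
  refine Finset.sum_congr rfl fun b _ => ?_
  rw [hT a b]; ring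

lemma sq_sum_zero (B : Matrix ι ι ℤ) (h : ∑ a : ι, ∑ b : ι, (B a b)^2 = 0) : B = 0 := by
  ext a b
  have h1 : ∀ a ∈ (univ : Finset ι), (0:ℤ) ≤ ∑ b : ι, (B a b)^2 :=
    fun a _ => Finset.sum_nonneg fun b _ => sq_nonneg _
  have h2 := (Finset.sum_eq_zero_iff_of_nonneg h1).mp h a (mem_univ a)
  have h3 : ∀ b ∈ (univ : Finset ι), (0:ℤ) ≤ (B a b)^2 := fun b _ => sq_nonneg _
  have h4 := (Finset.sum_eq_zero_iff_of_nonneg h3).mp h2 b (mem_univ b)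
  rw [Matrix.zero_apply]
  exact sq_eq_zero_iff.mp h4

lemma anti_nilpotent (A : Matrix ι ι ℤ) (hA : Aᵀ = -A) :
    ∀ k : ℕ, A ^ k = 0 → A = 0 := by
  intro k
  induction k using Nat.strong_induction_on with
  | _ k ih =>
    intro hk
    match k, hk with
    | 0, hk =>
      have h0 : A = A * (A ^ 0) := by rw [pow_zero, mul_one]
      rw [h0, hk, mul_zero]
    | 1, hk => rwa [pow_one] at hk
    | (k+2), hk =>
      have h2 : A ^ (2 * (k+1)) = 0 := by
        have hh : 2 * (k+1) = (k+2) + k := by ring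
        rw [hh, pow_add, hk, zero_mul]
      have htr : (A ^ (2*(k+1))).trace = 0 := by rw [h2, Matrix.trace_zero]
      rw [trace_split A hA (k+1)] at htr
      have hsum : ∑ a : ι, ∑ b : ι, ((A ^ (k+1)) a b)^2 = 0 := by
        rcases Nat.even_or_odd (k+1) with he | ho
        · rw [he.neg_one_pow] at htr; simpa using htr
        · rw [ho.neg_one_pow] at htr; simpa using htr
      exact ih (k+1) (by omega) (sq_sum_zero _ hsum)

lemma anti_trace_ne (A : Matrix ι ι ℤ) (hA : Aᵀ = -A) (hA0 : A ≠ 0) (k : ℕ) (hk : 1 ≤ k) :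
    (A ^ (2*k)).trace ≠ 0 := by
  rw [trace_split A hA k]
  have hAk : A ^ k ≠ 0 := fun h => hA0 (anti_nilpotent A hA k h)
  have hs : ∑ a : ι, ∑ b : ι, ((A ^ k) a b)^2 ≠ 0 := fun h => hAk (sq_sum_zero _ h)
  intro hcontra
  rcases Nat.even_or_odd k with he | ho
  · rw [he.neg_one_pow] at hcontra; simp at hcontra; exact hs hcontra
  · rw [ho.neg_one_pow] at hcontra; simp at hcontra; exact hs hcontra

end MatrixLemmas

lemma fin_val_add_one {k : ℕ} [NeZero k] (hk : 2 ≤ k) (i : Fin k) :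
    ((i + 1 : Fin k) : ℕ) = if i.val + 1 = k then 0 else i.val + 1 := by
  have h1 : (1 : Fin k).val = 1 := by
    rw [Fin.val_one']; exact Nat.mod_eq_of_lt (by omega)
  have h : ((i + 1 : Fin k)).val = (i.val + 1) % k := by
    rw [Fin.add_def, h1]
  rw [h]
  split_ifs with hif
  · rw [hif, Nat.mod_self]
  · exact Nat.mod_eq_of_lt (by omega)

section Torus

variable (p q : ℕ) [NeZero p] [NeZero q]

def filtE : Finset ((Fin p × Fin q) × (Fin p × Fin q)) :=
  univ.filter (fun e => (e.1.2 < e.2.2 ∨ (e.1.2 = e.2.2 ∧ e.1.1 < e.2.1))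
    ∧ (cycleGraph p □ cycleGraph q).Adj e.1 e.2)

def Phi : (Fin p × Fin q) × Bool → (Fin p × Fin q) × (Fin p × Fin q) := fun x =>
  if x.2 = false then
    (if x.1.1.val + 1 < p then (x.1, (x.1.1 + 1, x.1.2)) else ((x.1.1 + 1, x.1.2), x.1))
  else
    (if x.1.2.val + 1 < q then (x.1, (x.1.1, x.1.2 + 1)) else ((x.1.1, x.1.2 + 1), x.1))

def oth : (Fin p × Fin q) × Bool → Fin p × Fin q := fun x =>
  if x.2 = false then (x.1.1 + 1, x.1.2) else (x.1.1, x.1.2 + 1)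

def sg : (Fin p × Fin q) × Bool → ℤ := fun x =>
  if x.2 = false then (if x.1.1.val + 1 < p then 1 else -1)
  else (if x.1.2.val + 1 < q then 1 else -1)

def Psi : (Fin p × Fin q) × (Fin p × Fin q) → (Fin p × Fin q) × Bool := fun e =>
  if e.1.2 = e.2.2 then (if e.2.1 = e.1.1 + 1 then (e.1, false) else (e.2, false))
  else (if e.2.2 = e.1.2 + 1 then (e.1, true) else (e.2, true))

variable {p q}

lemma Phi_false_lt {i : Fin p} {j : Fin q} (h : i.val + 1 < p) :
    Phi p q ((i, j), false) = ((i, j), (i + 1, j)) := by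
  simp [Phi, h]

lemma Phi_false_wrap {i : Fin p} {j : Fin q} (h : ¬ (i.val + 1 < p)) :
    Phi p q ((i, j), false) = ((i + 1, j), (i, j)) := by
  simp [Phi, h]

lemma Phi_true_lt {i : Fin p} {j : Fin q} (h : j.val + 1 < q) :
    Phi p q ((i, j), true) = ((i, j), (i, j + 1)) := by
  simp [Phi, h]

lemma Phi_true_wrap {i : Fin p} {j : Fin q} (h : ¬ (j.val + 1 < q)) :
    Phi p q ((i, j), true) = ((i, j + 1), (i, j)) := by
  simp [Phi, h]

lemma fin_succ_ne {k : ℕ} [NeZero k] (hk : 2 ≤ k) (i : Fin k) : i ≠ i + 1 := by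
  intro hcontra
  have hv := fin_val_add_one hk i
  split_ifs at hv with h
  · rw [← hcontra] at hv; omega
  · rw [← hcontra] at hv; omega

lemma fin_succ_succ_ne {k : ℕ} [NeZero k] (hk : 3 ≤ k) (i : Fin k) : i ≠ (i + 1) + 1 := by
  intro hcontra
  have hv := fin_val_add_one (by omega : 2 ≤ k) i
  have hv2 := fin_val_add_one (by omega : 2 ≤ k) (i + 1)
  rw [← hcontra] at hv2
  split_ifs at hv with h <;> split_ifs at hv2 with h2 <;> omega

lemma cyc_adj_succ (hp : 3 ≤ p) (i : Fin p) : (cycleGraph p).Adj i (i + 1) := by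
  rw [cycleGraph_adj']
  right
  rw [add_sub_cancel_left, Fin.val_one']
  exact Nat.mod_eq_of_lt (by omega)

lemma Phi_mem (hp : 3 ≤ p) (hq : 3 ≤ q) (x : (Fin p × Fin q) × Bool) :
    Phi p q x ∈ filtE p q := by
  obtain ⟨⟨i, j⟩, b⟩ := x
  have hvi := fin_val_add_one (by omega : 2 ≤ p) i
  have hvj := fin_val_add_one (by omega : 2 ≤ q) j
  rw [filtE, Finset.mem_filter]
  refine ⟨Finset.mem_univ _, ?_⟩
  cases b
  · have hadj : (cycleGraph p □ cycleGraph q).Adj (i, j) (i + 1, j) :=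
      SimpleGraph.boxProd_adj.mpr (Or.inl ⟨cyc_adj_succ hp i, rfl⟩)
    by_cases h : i.val + 1 < p
    · rw [Phi_false_lt h]
      refine ⟨Or.inr ⟨rfl, ?_⟩, hadj⟩
      show i < i + 1
      rw [Fin.lt_def, hvi, if_neg (by omega)]
      omega
    · rw [Phi_false_wrap h]
      refine ⟨Or.inr ⟨rfl, ?_⟩, hadj.symm⟩
      show i + 1 < i
      rw [Fin.lt_def, hvi, if_pos (by omega)]
      omega
  · have hadj : (cycleGraph p □ cycleGraph q).Adj (i, j) (i, j + 1) :=
      SimpleGraph.boxProd_adj.mpr (Or.inr ⟨cyc_adj_succ hq j, rfl⟩)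
    by_cases h : j.val + 1 < q
    · rw [Phi_true_lt h]
      refine ⟨Or.inl ?_, hadj⟩
      show j < j + 1
      rw [Fin.lt_def, hvj, if_neg (by omega)]
      omega
    · rw [Phi_true_wrap h]
      refine ⟨Or.inl ?_, hadj.symm⟩
      show j + 1 < j
      rw [Fin.lt_def, hvj, if_pos (by omega)]
      omega

lemma Psi_Phi (hp : 3 ≤ p) (hq : 3 ≤ q) (x : (Fin p × Fin q) × Bool) :
    Psi p q (Phi p q x) = x := by
  obtain ⟨⟨i, j⟩, b⟩ := x
  cases b
  · by_cases h : i.val + 1 < p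
    · rw [Phi_false_lt h]
      simp [Psi]
    · rw [Phi_false_wrap h]
      have hne : i ≠ (i + 1) + 1 := fin_succ_succ_ne hp i
      simp [Psi, hne]
  · by_cases h : j.val + 1 < q
    · rw [Phi_true_lt h]
      have hne : j ≠ j + 1 := fin_succ_ne (by omega) j
      simp [Psi, hne]
    · rw [Phi_true_wrap h]
      have hne1 : j + 1 ≠ j := (fin_succ_ne (by omega) j).symm
      have hne2 : j ≠ (j + 1) + 1 := fin_succ_succ_ne hq j
      simp [Psi, hne1, hne2]

-- key: if w - u = 1 in Fin k then w = u + 1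
lemma fin_eq_add_of_sub {k : ℕ} [NeZero k] (hk : 2 ≤ k) (u w : Fin k) (h : (w - u).val = 1) :
    w = u + 1 := by
  have h1 : w - u = 1 := by
    apply Fin.ext
    rw [h, Fin.val_one']
    exact (Nat.mod_eq_of_lt (by omega)).symm
  have := sub_eq_iff_eq_add.mp h1
  rw [this]; exact add_comm _ _

lemma Phi_surj (hp : 3 ≤ p) (hq : 3 ≤ q) (e : (Fin p × Fin q) × (Fin p × Fin q))
    (he : e ∈ filtE p q) : ∃ x, Phi p q x = e := by
  obtain ⟨u, w⟩ := e
  rw [filtE, Finset.mem_filter] at he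
  obtain ⟨-, hlt, hadj⟩ := he
  rw [SimpleGraph.boxProd_adj] at hadj
  rcases hadj with ⟨hadj1, hcol⟩ | ⟨hadj2, hrow⟩
  · -- vertical : u.2 = w.2, adjacency in first coord
    -- lt must be the second disjunct
    have hcol' : u.2 = w.2 := hcol
    have hltv : u.1 < w.1 := by
      rcases hlt with h | ⟨-, h⟩
      · rw [hcol'] at h; exact absurd h (lt_irrefl _)
      · exact h
    rw [cycleGraph_adj'] at hadj1
    rcases hadj1 with h1 | h1
    · -- (u.1 - w.1).val = 1, so u.1 = w.1 + 1 : wrap case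
      have hu : u.1 = w.1 + 1 := fin_eq_add_of_sub (by omega) w.1 u.1 h1
      have hval := fin_val_add_one (by omega : 2 ≤ p) w.1
      have hwrap : ¬ (w.1.val + 1 < p) := by
        intro hcon
        rw [if_neg (by omega)] at hval
        rw [Fin.lt_def, hu, hval] at hltv
        omega
      refine ⟨((w.1, w.2), false), ?_⟩
      rw [Phi_false_wrap hwrap]
      have : w = (w.1, w.2) := rfl
      rw [Prod.ext_iff]
      constructor
      · rw [Prod.ext_iff]; exact ⟨hu.symm, hcol'.symm⟩
      · rfl
    · -- (w.1 - u.1).val = 1, so w.1 = u.1 + 1 : normal case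
      have hw : w.1 = u.1 + 1 := fin_eq_add_of_sub (by omega) u.1 w.1 h1
      have hval := fin_val_add_one (by omega : 2 ≤ p) u.1
      have hnw : u.1.val + 1 < p := by
        by_contra hcon
        rw [if_pos (by omega)] at hval
        rw [Fin.lt_def, hw, hval] at hltv
        omega
      refine ⟨((u.1, u.2), false), ?_⟩
      rw [Phi_false_lt hnw]
      rw [Prod.ext_iff]
      constructor
      · rfl
      · rw [Prod.ext_iff]; exact ⟨hw.symm, hcol'⟩
  · -- horizontal
    have hrow' : u.1 = w.1 := hrow
    rw [cycleGraph_adj'] at hadj2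
    have hltv : u.2 < w.2 := by
      rcases hlt with h | ⟨h, -⟩
      · exact h
      · exfalso
        rcases hadj2 with h1 | h1 <;> rw [h] at h1 <;> simp [sub_self] at h1
    rcases hadj2 with h1 | h1
    · have hu : u.2 = w.2 + 1 := fin_eq_add_of_sub (by omega) w.2 u.2 h1
      have hval := fin_val_add_one (by omega : 2 ≤ q) w.2
      have hwrap : ¬ (w.2.val + 1 < q) := by
        intro hcon
        rw [if_neg (by omega)] at hval
        rw [Fin.lt_def, hu, hval] at hltv
        omega
      refine ⟨((w.1, w.2), true), ?_⟩
      rw [Phi_true_wrap hwrap]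
      rw [Prod.ext_iff]
      constructor
      · rw [Prod.ext_iff]; exact ⟨hrow'.symm, hu.symm⟩
      · rfl
    · have hw : w.2 = u.2 + 1 := fin_eq_add_of_sub (by omega) u.2 w.2 h1
      have hval := fin_val_add_one (by omega : 2 ≤ q) u.2
      have hnw : u.2.val + 1 < q := by
        by_contra hcon
        rw [if_pos (by omega)] at hval
        rw [Fin.lt_def, hw, hval] at hltv
        omega
      refine ⟨((u.1, u.2), true), ?_⟩
      rw [Phi_true_lt hnw]
      rw [Prod.ext_iff]
      constructor
      · rfl
      · rw [Prod.ext_iff]; exact ⟨hrow', hw.symm⟩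

lemma Phi_injective (hp : 3 ≤ p) (hq : 3 ≤ q) : Function.Injective (Phi p q) :=
  Function.LeftInverse.injective (g := Psi p q) (Psi_Phi hp hq)

lemma filtE_eq (hp : 3 ≤ p) (hq : 3 ≤ q) :
    filtE p q = Finset.image (Phi p q) univ := by
  apply Finset.Subset.antisymm
  · intro e he
    obtain ⟨x, hx⟩ := Phi_surj hp hq e he
    exact Finset.mem_image.mpr ⟨x, mem_univ x, hx⟩
  · intro e he
    obtain ⟨x, -, hx⟩ := Finset.mem_image.mp he
    rw [← hx]
    exact Phi_mem hp hq x

lemma prod_filtE {β : Type*} [CommMonoid β] (hp : 3 ≤ p) (hq : 3 ≤ q)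
    (g : (Fin p × Fin q) × (Fin p × Fin q) → β) :
    ∏ e ∈ filtE p q, g e = ∏ x : (Fin p × Fin q) × Bool, g (Phi p q x) := by
  rw [filtE_eq hp hq]
  rw [Finset.prod_image (fun x _ y _ h => Phi_injective hp hq h)]

lemma sum_filtE {β : Type*} [AddCommMonoid β] (hp : 3 ≤ p) (hq : 3 ≤ q)
    (g : (Fin p × Fin q) × (Fin p × Fin q) → β) :
    ∑ e ∈ filtE p q, g e = ∑ x : (Fin p × Fin q) × Bool, g (Phi p q x) := by
  rw [filtE_eq hp hq]
  rw [Finset.sum_image (fun x _ y _ h => Phi_injective hp hq h)]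

lemma oth_false (v : Fin p × Fin q) : oth p q (v, false) = (v.1 + 1, v.2) := by simp [oth]
lemma oth_true (v : Fin p × Fin q) : oth p q (v, true) = (v.1, v.2 + 1) := by simp [oth]

lemma shift1_sum {β : Type*} [AddCommMonoid β] (c : Fin p × Fin q → β) :
    ∑ v : Fin p × Fin q, c (v.1 + 1, v.2) = ∑ v : Fin p × Fin q, c v :=
  Fintype.sum_equiv (Equiv.prodCongr (Equiv.addRight (1 : Fin p)) (Equiv.refl (Fin q)))
    _ _ (fun v => rfl)

lemma shift2_sum {β : Type*} [AddCommMonoid β] (c : Fin p × Fin q → β) :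
    ∑ v : Fin p × Fin q, c (v.1, v.2 + 1) = ∑ v : Fin p × Fin q, c v :=
  Fintype.sum_equiv (Equiv.prodCongr (Equiv.refl (Fin p)) (Equiv.addRight (1 : Fin q)))
    _ _ (fun v => rfl)

lemma Phi_pair_sum (c : Fin p × Fin q → ZMod 3) (x : (Fin p × Fin q) × Bool) :
    c (Phi p q x).1 + c (Phi p q x).2 = c x.1 + c (oth p q x) := by
  obtain ⟨⟨i, j⟩, b⟩ := x
  cases b
  · by_cases h : i.val + 1 < p
    · rw [Phi_false_lt h, oth_false]
    · rw [Phi_false_wrap h, oth_false]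
      exact add_comm _ _
  · by_cases h : j.val + 1 < q
    · rw [Phi_true_lt h, oth_true]
    · rw [Phi_true_wrap h, oth_true]
      exact add_comm _ _

lemma count_c (hp : 3 ≤ p) (hq : 3 ≤ q) (c : Fin p × Fin q → ZMod 3) :
    ∑ e ∈ filtE p q, (c e.1 + c e.2) = ∑ v : Fin p × Fin q, c v := by
  rw [sum_filtE hp hq]
  rw [Finset.sum_congr rfl (fun x _ => Phi_pair_sum c x)]
  rw [Fintype.sum_prod_type]
  have hb : ∀ v : Fin p × Fin q, (∑ b : Bool, (c (v, b).1 + c (oth p q (v, b))))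
      = (c v + c (v.1, v.2 + 1)) + (c v + c (v.1 + 1, v.2)) := by
    intro v
    rw [Fintype.sum_bool, oth_true, oth_false]
  rw [Finset.sum_congr rfl (fun v _ => hb v)]
  rw [Finset.sum_add_distrib, Finset.sum_add_distrib, Finset.sum_add_distrib]
  rw [shift1_sum, shift2_sum]
  set S := ∑ v : Fin p × Fin q, c v
  calc S + S + (S + S) = 4 * S := by ring
  _ = 1 * S := by rw [show (4 : ZMod 3) = 1 from by decide]
  _ = S := one_mul S

lemma sg_false_lt {i : Fin p} {j : Fin q} (h : i.val + 1 < p) :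
    sg p q ((i, j), false) = 1 := by simp [sg, h]
lemma sg_false_wrap {i : Fin p} {j : Fin q} (h : ¬ (i.val + 1 < p)) :
    sg p q ((i, j), false) = -1 := by simp [sg, h]
lemma sg_true_lt {i : Fin p} {j : Fin q} (h : j.val + 1 < q) :
    sg p q ((i, j), true) = 1 := by simp [sg, h]
lemma sg_true_wrap {i : Fin p} {j : Fin q} (h : ¬ (j.val + 1 < q)) :
    sg p q ((i, j), true) = -1 := by simp [sg, h]

lemma Phi_chi (c : Fin p × Fin q → ZMod 3) (x : (Fin p × Fin q) × Bool) :
    chiz (c (Phi p q x).1 - c (Phi p q x).2)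
      = sg p q x * chiz (c x.1 - c (oth p q x)) := by
  obtain ⟨⟨i, j⟩, b⟩ := x
  dsimp only
  cases b
  · by_cases h : i.val + 1 < p
    · rw [Phi_false_lt h, oth_false, sg_false_lt h, one_mul]
    · rw [Phi_false_wrap h, oth_false, sg_false_wrap h]
      dsimp only
      rw [← neg_sub (c (i, j)) (c (i + 1, j)), chiz_neg]
      ring
  · by_cases h : j.val + 1 < q
    · rw [Phi_true_lt h, oth_true, sg_true_lt h, one_mul]
    · rw [Phi_true_wrap h, oth_true, sg_true_wrap h]
      dsimp only
      rw [← neg_sub (c (i, j)) (c (i, j + 1)), chiz_neg]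
      ring

lemma sg_sq (x : (Fin p × Fin q) × Bool) : sg p q x * sg p q x = 1 := by
  unfold sg
  split_ifs <;> ring

end Torus

section TransferMatrix

variable (p : ℕ) [NeZero p]

def properS (s : Fin p → ZMod 3) : Prop := ∀ i, s i ≠ s (i + 1)

instance : DecidablePred (properS p) := fun _ => Fintype.decidableForallFintype

def colB (s t : Fin p → ZMod 3) : ℤ :=
  (∏ i, chiz (s i - s (i + 1))) * ∏ i, chiz (s i - t i)

def PS := {s : Fin p → ZMod 3 // properS p s}

instance : Fintype (PS p) := Subtype.fintype _
instance : DecidableEq (PS p) := Subtype.instDecidableEq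

def MT : Matrix (PS p) (PS p) ℤ := fun s t => colB p s.1 t.1

variable {p}

lemma colB_antisym (hodd : Odd p) {s t : Fin p → ZMod 3}
    (hs : properS p s) (ht : properS p t) : colB p t s = - colB p s t := by
  by_cases hst : ∀ i, s i ≠ t i
  · have h1 : (∏ i, chiz (t i - s i)) = - ∏ i, chiz (s i - t i) := by
      have e1 : ∀ i : Fin p, chiz (t i - s i) = (-1) * chiz (s i - t i) := by
        intro i
        rw [← neg_sub (s i) (t i), chiz_neg]
        ring
      rw [Finset.prod_congr rfl (fun i _ => e1 i), Finset.prod_mul_distrib,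
        Finset.prod_const, Finset.card_univ, Fintype.card_fin, hodd.neg_one_pow]
      ring
    have h2 : (∏ i, chiz (t i - t (i + 1))) = ∏ i, chiz (s i - s (i + 1)) := by
      have e2 : ∀ i : Fin p, chiz (t i - t (i + 1))
          = chiz (s i - s (i + 1)) * sgm (s i - t i) * sgm (s (i + 1) - t (i + 1)) :=
        fun i => chi_quad _ _ _ _ (hs i) (ht i) (hst i) (hst (i + 1))
      rw [Finset.prod_congr rfl (fun i _ => e2 i), Finset.prod_mul_distrib,
        Finset.prod_mul_distrib]
      have hshift : (∏ i : Fin p, sgm (s (i + 1) - t (i + 1)))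
          = ∏ i : Fin p, sgm (s i - t i) :=
        Fintype.prod_equiv (Equiv.addRight (1 : Fin p)) _ _ (fun i => rfl)
      rw [hshift, mul_assoc, ← Finset.prod_mul_distrib]
      rw [Finset.prod_congr rfl (fun i _ => sgm_sq (s i - t i)), Finset.prod_const_one,
        mul_one]
    unfold colB
    rw [h1, h2]
    ring
  · push_neg at hst
    obtain ⟨i0, hi0⟩ := hst
    have z1 : (∏ i, chiz (s i - t i)) = 0 :=
      Finset.prod_eq_zero (mem_univ i0) (by rw [hi0, sub_self]; rfl)
    have z2 : (∏ i, chiz (t i - s i)) = 0 :=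
      Finset.prod_eq_zero (mem_univ i0) (by rw [hi0, sub_self]; rfl)
    unfold colB
    rw [z1, z2]
    ring

lemma MT_antisym (hodd : Odd p) : (MT p)ᵀ = - MT p := by
  ext s t
  rw [Matrix.transpose_apply, Matrix.neg_apply]
  exact colB_antisym hodd s.2 t.2

end TransferMatrix

section Witness

variable (m : ℕ)

def wcol : Fin (2*m+1) → ZMod 3 := fun i =>
  if i.val = 2*m then 2 else ((i.val % 2 : ℕ) : ZMod 3)

variable {m}

lemma wcol_proper (hm : 1 ≤ m) : properS (2*m+1) (wcol m) := by
  intro i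
  have hv := fin_val_add_one (k := 2*m+1) (by omega) i
  unfold wcol
  by_cases h : i.val = 2*m
  · have h1 : (i + 1 : Fin (2*m+1)).val = 0 := by rw [hv, if_pos (by omega)]
    rw [if_pos h, h1, if_neg (by omega)]
    decide
  · have hlt : i.val < 2*m := by have := i.isLt; omega
    have h1 : (i + 1 : Fin (2*m+1)).val = i.val + 1 := by rw [hv, if_neg (by omega)]
    rw [if_neg h, h1]
    by_cases h2 : i.val + 1 = 2*m
    · rw [if_pos h2]
      have : i.val % 2 = 1 := by omega
      rw [this]
      decide
    · rw [if_neg h2]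
      rcases Nat.even_or_odd i.val with ⟨r, hr⟩ | ⟨r, hr⟩
      · have e1 : i.val % 2 = 0 := by omega
        have e2 : (i.val + 1) % 2 = 1 := by omega
        rw [e1, e2]; decide
      · have e1 : i.val % 2 = 1 := by omega
        have e2 : (i.val + 1) % 2 = 0 := by omega
        rw [e1, e2]; decide

lemma wcol_shift_proper (hm : 1 ≤ m) : properS (2*m+1) (fun i => wcol m i + 1) := by
  intro i hcon
  exact wcol_proper hm i (add_right_cancel hcon)

lemma MT_ne_zero (hm : 1 ≤ m) : MT (2*m+1) ≠ 0 := by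
  intro h
  have h1 := congrFun (congrFun h ⟨wcol m, wcol_proper hm⟩)
    ⟨fun i => wcol m i + 1, wcol_shift_proper hm⟩
  have h2 : colB (2*m+1) (wcol m) (fun i => wcol m i + 1) = 0 := h1
  unfold colB at h2
  have h3 : (∏ i : Fin (2*m+1), chiz (wcol m i - (wcol m i + 1))) = 1 := by
    have : ∀ i : Fin (2*m+1), chiz (wcol m i - (wcol m i + 1)) = 1 := by
      intro i
      have hx : ∀ a : ZMod 3, a - (a + 1) = 2 := by decide
      rw [hx (wcol m i), chiz_two_val]
    rw [Finset.prod_congr rfl (fun i _ => this i), Finset.prod_const_one]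
  rw [h3, mul_one] at h2
  have h4 : (∏ i : Fin (2*m+1), chiz (wcol m i - wcol m (i + 1))) ≠ 0 := by
    rw [Finset.prod_ne_zero_iff]
    exact fun i _ => chiz_ne_zero _ (sub_ne_zero_of_ne (wcol_proper hm i))
  exact h4 h2

end Witness

lemma cyc_trace' {ι : Type*} [Fintype ι] [DecidableEq ι] {R : Type*} [CommRing R]
    (A : Matrix ι ι R) (k : ℕ) [NeZero k] :
    ∑ G : Fin k → ι, ∏ j : Fin k, A (G j) (G (j + 1)) = (A ^ k).trace := by
  obtain ⟨k', rfl⟩ := Nat.exists_eq_succ_of_ne_zero (NeZero.ne k)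
  exact cyc_trace A k'

section TorusSum

variable {p q : ℕ} [NeZero p] [NeZero q]

lemma torus_sum_eq_trace :
    (∑ c : Fin p × Fin q → ZMod 3, ∏ v : Fin p × Fin q,
      (chiz (c v - c (v.1 + 1, v.2)) * chiz (c v - c (v.1, v.2 + 1))))
    = ((MT p) ^ q).trace := by
  classical
  let E : (Fin q → Fin p → ZMod 3) ≃ (Fin p × Fin q → ZMod 3) :=
    { toFun := fun F => fun v => F v.2 v.1
      invFun := fun c => fun j i => c (i, j)
      left_inv := fun F => rfl
      right_inv := fun c => rfl }
  rw [← Equiv.sum_comp E (fun c => ∏ v : Fin p × Fin q,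
    (chiz (c v - c (v.1 + 1, v.2)) * chiz (c v - c (v.1, v.2 + 1))))]
  have hF : ∀ F : Fin q → Fin p → ZMod 3,
      (∏ v : Fin p × Fin q, (chiz (E F v - E F (v.1 + 1, v.2))
        * chiz (E F v - E F (v.1, v.2 + 1))))
      = ∏ j : Fin q, colB p (F j) (F (j + 1)) := by
    intro F
    rw [Fintype.prod_prod_type, Finset.prod_comm]
    refine Finset.prod_congr rfl fun j _ => ?_
    rw [Finset.prod_mul_distrib]
    rfl
  rw [Finset.sum_congr rfl (fun F _ => hF F)]
  -- restrict to proper columns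
  have hzero : ∀ F : Fin q → Fin p → ZMod 3, (¬ ∀ j, properS p (F j)) →
      (∏ j : Fin q, colB p (F j) (F (j + 1))) = 0 := by
    intro F hFcon
    push_neg at hFcon
    obtain ⟨j0, hj0⟩ := hFcon
    refine Finset.prod_eq_zero (mem_univ j0) ?_
    unfold properS at hj0
    push_neg at hj0
    obtain ⟨i0, hi0⟩ := hj0
    unfold colB
    rw [Finset.prod_eq_zero (mem_univ i0) (by rw [hi0, sub_self]; rfl), zero_mul]
  have hrestrict : (∑ F : Fin q → Fin p → ZMod 3, ∏ j : Fin q, colB p (F j) (F (j + 1)))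
      = ∑ F ∈ Finset.univ.filter (fun F : Fin q → Fin p → ZMod 3 => ∀ j, properS p (F j)),
          ∏ j : Fin q, colB p (F j) (F (j + 1)) := by
    refine (Finset.sum_subset (Finset.filter_subset _ _) ?_).symm
    intro F _ hF
    rw [Finset.mem_filter] at hF
    push_neg at hF
    exact hzero F (by push_neg; exact hF (mem_univ F))
  rw [hrestrict]
  have hbij : (∑ F ∈ Finset.univ.filter (fun F : Fin q → Fin p → ZMod 3 => ∀ j, properS p (F j)),
          ∏ j : Fin q, colB p (F j) (F (j + 1)))
      = ∑ G : Fin q → PS p, ∏ j : Fin q, (MT p) (G j) (G (j + 1)) := by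
    refine Finset.sum_bij' (fun F hF => fun j => (⟨F j, (Finset.mem_filter.mp hF).2 j⟩ : PS p))
      (fun G _ => fun j => (G j).1) ?_ ?_ ?_ ?_ ?_
    · intro F hF
      exact mem_univ _
    · intro G _
      rw [Finset.mem_filter]
      exact ⟨mem_univ _, fun j => (G j).2⟩
    · intro F hF
      rfl
    · intro G _
      funext j
      rfl
    · intro F hF
      rfl
  rw [hbij]
  exact cyc_trace' (MT p) q

end TorusSum

lemma Zne (m n : ℕ) (hm : 1 ≤ m) (hn : 2 ≤ n) :
    (∑ c : Fin (2*m+1) × Fin (2*n) → ZMod 3,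
      ∏ e ∈ filtE (2*m+1) (2*n), chiz (c e.1 - c e.2)) ≠ 0 := by
  haveI : NeZero (2*n) := ⟨by omega⟩
  have hp : 3 ≤ 2*m+1 := by omega
  have hq : 3 ≤ 2*n := by omega
  have hsplit : ∀ c : Fin (2*m+1) × Fin (2*n) → ZMod 3,
      (∏ e ∈ filtE (2*m+1) (2*n), chiz (c e.1 - c e.2))
      = (∏ x : (Fin (2*m+1) × Fin (2*n)) × Bool, sg (2*m+1) (2*n) x)
        * ∏ x : (Fin (2*m+1) × Fin (2*n)) × Bool, chiz (c x.1 - c (oth (2*m+1) (2*n) x)) := by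
    intro c
    rw [prod_filtE hp hq]
    rw [Finset.prod_congr rfl (fun x _ => Phi_chi c x)]
    rw [Finset.prod_mul_distrib]
  have hoth : ∀ c : Fin (2*m+1) × Fin (2*n) → ZMod 3,
      (∏ x : (Fin (2*m+1) × Fin (2*n)) × Bool, chiz (c x.1 - c (oth (2*m+1) (2*n) x)))
      = ∏ v : Fin (2*m+1) × Fin (2*n),
          (chiz (c v - c (v.1 + 1, v.2)) * chiz (c v - c (v.1, v.2 + 1))) := by
    intro c
    rw [Fintype.prod_prod_type]
    refine Finset.prod_congr rfl fun v _ => ?_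
    rw [Fintype.prod_bool, oth_true, oth_false]
    exact mul_comm _ _
  intro hcontra
  set E := ∏ x : (Fin (2*m+1) × Fin (2*n)) × Bool, sg (2*m+1) (2*n) x with hE
  have hEE : E * E = 1 := by
    rw [hE, ← Finset.prod_mul_distrib]
    exact Finset.prod_eq_one (fun x _ => sg_sq x)
  have hfin : (∑ c : Fin (2*m+1) × Fin (2*n) → ZMod 3,
      ∏ e ∈ filtE (2*m+1) (2*n), chiz (c e.1 - c e.2))
      = E * ((MT (2*m+1)) ^ (2*n)).trace := by
    rw [Finset.sum_congr rfl (fun c _ => hsplit c)]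
    rw [← Finset.mul_sum]
    congr 1
    rw [Finset.sum_congr rfl (fun c _ => hoth c)]
    exact torus_sum_eq_trace
  rw [hfin] at hcontra
  have hodd : Odd (2*m+1) := ⟨m, by ring⟩
  have htr : ((MT (2*m+1)) ^ (2*n)).trace ≠ 0 :=
    anti_trace_ne (MT (2*m+1)) (MT_antisym hodd) (MT_ne_zero hm) n (le_trans one_le_two hn)
  have : E * (E * ((MT (2*m+1)) ^ (2*n)).trace) = 0 := by rw [hcontra, mul_zero]
  rw [← mul_assoc, hEE, one_mul] at this
  exact htr this

section KeyLemmas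

variable {p q : ℕ} [NeZero p] [NeZero q]

lemma key2 (hp : 3 ≤ p) (hq : 3 ≤ q) (c : Fin p × Fin q → ZMod 3) :
    MvPolynomial.eval (fun v => omz (c v))
      (∏ e ∈ filtE p q, (X e.1 - X e.2 : MvPolynomial (Fin p × Fin q) ℂ))
      * ∏ v : Fin p × Fin q, omz (c v)
    = tht ^ (filtE p q).card
      * ((∏ e ∈ filtE p q, chiz (c e.1 - c e.2) : ℤ) : ℂ) := by
  rw [map_prod]
  simp only [map_sub, eval_X]
  rw [Finset.prod_congr rfl (fun e _ => omz_sub_eq (c e.1) (c e.2))]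
  rw [Finset.prod_mul_distrib, Finset.prod_mul_distrib, Finset.prod_const]
  have hphase : (∏ e ∈ filtE p q, omz (-(c e.1 + c e.2))) * (∏ v : Fin p × Fin q, omz (c v))
      = 1 := by
    rw [← omz_sum, ← omz_sum, ← omz_add]
    have hsum : (∑ e ∈ filtE p q, -(c e.1 + c e.2)) = - ∑ e ∈ filtE p q, (c e.1 + c e.2) := by
      rw [Finset.sum_neg_distrib]
    rw [hsum, count_c hp hq c, neg_add_cancel, omz_zero]
  rw [mul_assoc, hphase, mul_one]
  rw [Int.cast_prod]

lemma deg_le_four (hp : 3 ≤ p) (hq : 3 ≤ q) (v : Fin p × Fin q) :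
    MvPolynomial.degreeOf v
      (∏ e ∈ filtE p q, (X e.1 - X e.2 : MvPolynomial (Fin p × Fin q) ℂ)) ≤ 4 := by
  refine le_trans (MvPolynomial.degreeOf_prod_le v _ _) ?_
  have per_edge : ∀ e ∈ filtE p q,
      MvPolynomial.degreeOf v (X e.1 - X e.2 : MvPolynomial (Fin p × Fin q) ℂ)
        ≤ (if v = e.1 then 1 else 0) + (if v = e.2 then 1 else 0) := by
    intro e _
    refine le_trans (MvPolynomial.degreeOf_sub_le v _ _) ?_
    rw [MvPolynomial.degreeOf_X, MvPolynomial.degreeOf_X]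
    split_ifs <;> simp
  refine le_trans (Finset.sum_le_sum per_edge) ?_
  rw [sum_filtE hp hq]
  have per_x : ∀ x : (Fin p × Fin q) × Bool,
      ((if v = (Phi p q x).1 then (1:ℕ) else 0) + (if v = (Phi p q x).2 then 1 else 0))
      = (if v = x.1 then 1 else 0) + (if v = oth p q x then 1 else 0) := by
    rintro ⟨⟨i, j⟩, b⟩
    dsimp only
    cases b
    · by_cases h : i.val + 1 < p
      · rw [Phi_false_lt h, oth_false]
      · rw [Phi_false_wrap h, oth_false]
        dsimp only
        exact add_comm _ _
    · by_cases h : j.val + 1 < q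
      · rw [Phi_true_lt h, oth_true]
      · rw [Phi_true_wrap h, oth_true]
        dsimp only
        exact add_comm _ _
  rw [Finset.sum_congr rfl (fun x _ => per_x x)]
  rw [Finset.sum_add_distrib]
  have h1 : (∑ x : (Fin p × Fin q) × Bool, if v = x.1 then (1:ℕ) else 0) = 2 := by
    rw [Fintype.sum_prod_type]
    have : ∀ w : Fin p × Fin q, (∑ _b : Bool, if v = w then (1:ℕ) else 0)
        = (if v = w then 1 else 0) + (if v = w then 1 else 0) := fun w => Fintype.sum_bool _
    rw [Finset.sum_congr rfl (fun w _ => this w), Finset.sum_add_distrib,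
      Finset.sum_ite_eq univ v (fun _ => (1:ℕ))]
    simp
  have h2 : (∑ x : (Fin p × Fin q) × Bool, if v = oth p q x then (1:ℕ) else 0) = 2 := by
    rw [Fintype.sum_prod_type]
    have hbool : ∀ w : Fin p × Fin q, (∑ b : Bool, if v = oth p q (w, b) then (1:ℕ) else 0)
        = (if v = (w.1, w.2 + 1) then 1 else 0) + (if v = (w.1 + 1, w.2) then 1 else 0) := by
      intro w
      rw [Fintype.sum_bool, oth_true, oth_false]
    rw [Finset.sum_congr rfl (fun w _ => hbool w), Finset.sum_add_distrib]
    have s1 : (∑ w : Fin p × Fin q, if v = (w.1, w.2 + 1) then (1:ℕ) else 0) = 1 := by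
      rw [Fintype.sum_equiv (Equiv.prodCongr (Equiv.refl (Fin p)) (Equiv.addRight (1 : Fin q)))
        (fun w : Fin p × Fin q => if v = (w.1, w.2 + 1) then (1:ℕ) else 0)
        (fun u : Fin p × Fin q => if v = u then (1:ℕ) else 0) (fun w => rfl)]
      rw [Finset.sum_ite_eq univ v (fun _ => (1:ℕ))]
      simp
    have s2 : (∑ w : Fin p × Fin q, if v = (w.1 + 1, w.2) then (1:ℕ) else 0) = 1 := by
      rw [Fintype.sum_equiv (Equiv.prodCongr (Equiv.addRight (1 : Fin p)) (Equiv.refl (Fin q)))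
        (fun w : Fin p × Fin q => if v = (w.1 + 1, w.2) then (1:ℕ) else 0)
        (fun u : Fin p × Fin q => if v = u then (1:ℕ) else 0) (fun w => rfl)]
      rw [Finset.sum_ite_eq univ v (fun _ => (1:ℕ))]
      simp
    rw [s1, s2]
  rw [h1, h2]

lemma key1 (hp : 3 ≤ p) (hq : 3 ≤ q) :
    (∑ c : Fin p × Fin q → ZMod 3,
      MvPolynomial.eval (fun v => omz (c v))
        (∏ e ∈ filtE p q, (X e.1 - X e.2 : MvPolynomial (Fin p × Fin q) ℂ))
        * ∏ v : Fin p × Fin q, omz (c v))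
    = (3:ℂ) ^ (Fintype.card (Fin p × Fin q))
      * MvPolynomial.coeff (Finsupp.equivFunOnFinite.symm fun _ => 2)
        (∏ e ∈ filtE p q, (X e.1 - X e.2 : MvPolynomial (Fin p × Fin q) ℂ)) := by
  classical
  set f : MvPolynomial (Fin p × Fin q) ℂ := ∏ e ∈ filtE p q, (X e.1 - X e.2) with hf
  set all2 : (Fin p × Fin q) →₀ ℕ := Finsupp.equivFunOnFinite.symm fun _ => 2 with hall2
  have hall2v : ∀ v, all2 v = 2 := fun v => rfl
  have step1 : ∀ c : Fin p × Fin q → ZMod 3,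
      MvPolynomial.eval (fun v => omz (c v)) f * ∏ v : Fin p × Fin q, omz (c v)
      = ∑ t ∈ f.support, MvPolynomial.coeff t f
          * ∏ v : Fin p × Fin q, omz (c v) ^ (t v + 1) := by
    intro c
    rw [MvPolynomial.eval_eq', Finset.sum_mul]
    refine Finset.sum_congr rfl fun t _ => ?_
    rw [mul_assoc]
    congr 1
    rw [← Finset.prod_mul_distrib]
    exact Finset.prod_congr rfl fun v _ => (pow_succ _ _).symm
  rw [Finset.sum_congr rfl (fun c _ => step1 c), Finset.sum_comm]
  have step2 : ∀ t : (Fin p × Fin q) →₀ ℕ,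
      (∑ c : Fin p × Fin q → ZMod 3, MvPolynomial.coeff t f
        * ∏ v : Fin p × Fin q, omz (c v) ^ (t v + 1))
      = MvPolynomial.coeff t f
        * ∏ v : Fin p × Fin q, (if (3:ℕ) ∣ (t v + 1) then (3:ℂ) else 0) := by
    intro t
    rw [← Finset.mul_sum]
    congr 1
    rw [← Fintype.prod_sum (fun (v : Fin p × Fin q) (a : ZMod 3) => omz a ^ (t v + 1))]
    exact Finset.prod_congr rfl fun v _ => sum_omz_pow (t v + 1)
  rw [Finset.sum_congr rfl (fun t _ => step2 t)]
  have step3 : ∀ t ∈ f.support,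
      MvPolynomial.coeff t f * ∏ v : Fin p × Fin q, (if (3:ℕ) ∣ (t v + 1) then (3:ℂ) else 0)
      = if t = all2 then
          (3:ℂ) ^ (Fintype.card (Fin p × Fin q)) * MvPolynomial.coeff all2 f else 0 := by
    intro t ht
    by_cases hall : ∀ v : Fin p × Fin q, (3:ℕ) ∣ (t v + 1)
    · have ht2 : t = all2 := by
        ext v
        have hb := le_trans (MvPolynomial.monomial_le_degreeOf v ht) (deg_le_four hp hq v)
        have hd := hall v
        have : t v = 2 := by omega
        rw [this, hall2v]
      rw [if_pos ht2, Finset.prod_congr rfl (fun v _ => if_pos (hall v)),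
        Finset.prod_const, Finset.card_univ, ht2]
      ring
    · push_neg at hall
      obtain ⟨v0, hv0⟩ := hall
      rw [if_neg ?_, Finset.prod_eq_zero (mem_univ v0)
        (show (if (3:ℕ) ∣ (t v0 + 1) then (3:ℂ) else 0) = 0 from if_neg hv0), mul_zero]
      intro hcon
      rw [hcon] at hv0
      rw [hall2v v0] at hv0
      exact hv0 ⟨1, rfl⟩
  rw [Finset.sum_congr rfl step3, Finset.sum_ite_eq' f.support all2
    (fun _ => (3:ℂ) ^ (Fintype.card (Fin p × Fin q)) * MvPolynomial.coeff all2 f)]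
  by_cases hmem : all2 ∈ f.support
  · rw [if_pos hmem]
  · rw [if_neg hmem, MvPolynomial.notMem_support_iff.mp hmem, mul_zero]

end KeyLemmas

/-- For `m ≥ 1`, `n ≥ 2`, the Alon–Tarsi number of `T_{2m+1,2n}` is 3: the graph
polynomial has a monomial with non-zero coefficient and all exponents at most 2, but
no such monomial with all exponents at most 1. -/
theorem stmt14 (m n : ℕ) (hm : 1 ≤ m) (hn : 2 ≤ n) :
    (∃ t : Fin (2 * m + 1) × Fin (2 * n) →₀ ℕ,
        MvPolynomial.coeff t
            (graphPoly ℂ (cycleGraph (2 * m + 1) □ cycleGraph (2 * n))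
              (fun p q => p.2 < q.2 ∨ (p.2 = q.2 ∧ p.1 < q.1))) ≠ 0 ∧
          ∀ v, t v ≤ 2) ∧
      ¬ ∃ t : Fin (2 * m + 1) × Fin (2 * n) →₀ ℕ,
          MvPolynomial.coeff t
              (graphPoly ℂ (cycleGraph (2 * m + 1) □ cycleGraph (2 * n))
                (fun p q => p.2 < q.2 ∨ (p.2 = q.2 ∧ p.1 < q.1))) ≠ 0 ∧
            ∀ v, t v ≤ 1 := by
  haveI : NeZero (2 * n) := ⟨by omega⟩
  have hp : 3 ≤ 2 * m + 1 := by omega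
  have hq : 3 ≤ 2 * n := by omega
  have hGP : graphPoly ℂ (cycleGraph (2 * m + 1) □ cycleGraph (2 * n))
      (fun p q => p.2 < q.2 ∨ (p.2 = q.2 ∧ p.1 < q.1))
      = ∏ e ∈ filtE (2 * m + 1) (2 * n),
          (X e.1 - X e.2 : MvPolynomial (Fin (2 * m + 1) × Fin (2 * n)) ℂ) := rfl
  constructor
  · refine ⟨Finsupp.equivFunOnFinite.symm fun _ => 2, ?_, fun v => le_refl 2⟩
    rw [hGP]
    intro h0
    have hk1 := key1 hp hq
    have hk2 : (∑ c : Fin (2 * m + 1) × Fin (2 * n) → ZMod 3,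
        MvPolynomial.eval (fun v => omz (c v))
          (∏ e ∈ filtE (2 * m + 1) (2 * n),
            (X e.1 - X e.2 : MvPolynomial (Fin (2 * m + 1) × Fin (2 * n)) ℂ))
          * ∏ v : Fin (2 * m + 1) × Fin (2 * n), omz (c v))
        = tht ^ (filtE (2 * m + 1) (2 * n)).card
          * ((∑ c : Fin (2 * m + 1) × Fin (2 * n) → ZMod 3,
              ∏ e ∈ filtE (2 * m + 1) (2 * n), chiz (c e.1 - c e.2) : ℤ) : ℂ) := by
      rw [Finset.sum_congr rfl (fun c _ => key2 hp hq c), ← Finset.mul_sum]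
      congr 1
      rw [Int.cast_sum]
    rw [hk2, h0, mul_zero] at hk1
    have hth : tht ^ (filtE (2 * m + 1) (2 * n)).card ≠ 0 := pow_ne_zero _ tht_ne
    have hZ : ((∑ c : Fin (2 * m + 1) × Fin (2 * n) → ZMod 3,
        ∏ e ∈ filtE (2 * m + 1) (2 * n), chiz (c e.1 - c e.2) : ℤ) : ℂ) = 0 := by
      rcases mul_eq_zero.mp hk1 with h | h
      · exact absurd h hth
      · exact h
    exact Zne m n hm hn (by exact_mod_cast hZ)
  · rintro ⟨t, htne, hle⟩
    rw [hGP] at htne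
    have hhom : (∏ e ∈ filtE (2 * m + 1) (2 * n),
        (X e.1 - X e.2 : MvPolynomial (Fin (2 * m + 1) × Fin (2 * n)) ℂ)).IsHomogeneous
          ((filtE (2 * m + 1) (2 * n)).card) := by
      have h := MvPolynomial.IsHomogeneous.prod (filtE (2 * m + 1) (2 * n))
        (fun e => (X e.1 - X e.2 : MvPolynomial (Fin (2 * m + 1) × Fin (2 * n)) ℂ))
        (fun _ => 1)
        (fun e _ => (MvPolynomial.isHomogeneous_X ℂ e.1).sub (MvPolynomial.isHomogeneous_X ℂ e.2))
      simpa using h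
    have hdeg := hhom htne
    rw [Finsupp.weight_apply] at hdeg
    simp only [Pi.one_apply, smul_eq_mul, mul_one] at hdeg
    have hsum_le : (t.sum fun _ c => c) ≤ Fintype.card (Fin (2 * m + 1) × Fin (2 * n)) := by
      rw [Finsupp.sum]
      calc ∑ v ∈ t.support, t v ≤ ∑ _v ∈ t.support, 1 :=
            Finset.sum_le_sum fun v _ => hle v
      _ = t.support.card := by simp
      _ ≤ (univ : Finset (Fin (2 * m + 1) × Fin (2 * n))).card := Finset.card_le_univ _
      _ = Fintype.card (Fin (2 * m + 1) × Fin (2 * n)) := Finset.card_univ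
    have hcard : (filtE (2 * m + 1) (2 * n)).card
        = 2 * Fintype.card (Fin (2 * m + 1) × Fin (2 * n)) := by
      rw [filtE_eq hp hq, Finset.card_image_of_injective _ (Phi_injective hp hq),
        Finset.card_univ, Fintype.card_prod, Fintype.card_bool]
      ring
    have hpos : 0 < Fintype.card (Fin (2 * m + 1) × Fin (2 * n)) := Fintype.card_pos
    omega
end

section
/- Let u, v : ℤ/(2m+1) → {1, w, w²} be two proper colorings of the odd cycle C_{2m+1} (w a primitive cube root of unity) with u_i ≠ v_i for all i. Set ε_i = u_i/u_{i-1} and δ_i = v_i/v_{i-1}. Then ∏_{i}(1-ε_i) = ∏_i(1-δ_i). -/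
open Complex Finset

lemma key17 (w a b c d : ℂ) (hw3 : w ^ 3 = 1) (hw1 : w ≠ 1)
    (ha : a = 1 ∨ a = w ∨ a = w ^ 2) (hb : b = 1 ∨ b = w ∨ b = w ^ 2)
    (hc : c = 1 ∨ c = w ∨ c = w ^ 2) (hd : d = 1 ∨ d = w ∨ d = w ^ 2)
    (hab : a ≠ b) (hcd : c ≠ d) (hac : a ≠ c) (hbd : b ≠ d) :
    (1 - a / b) * (if b = w * d then w ^ 2 else -w)
      = (1 - c / d) * (if a = w * c then w ^ 2 else -w) := by
  have h0 : w ≠ 0 := by rintro rfl; simp at hw3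
  have h21 : w ^ 2 ≠ 1 := fun h => hw1 (by linear_combination hw3 - w * h)
  have h2w : w ^ 2 ≠ w := fun h => hw1 (by linear_combination hw3 - w * h - h)
  have t1 : w = w * 1 := by ring
  have t2 : w ^ 2 = w * w := by ring
  have t3 : (1 : ℂ) = w * w ^ 2 := by linear_combination -hw3
  have f1 : ¬((1:ℂ) = w * 1) := by simpa using hw1.symm
  have f2 : ¬((1:ℂ) = w * w) := by rw [← sq]; exact fun h => h21 h.symm
  have f3 : ¬(w = w * w) := by rw [← sq]; exact fun h => h2w h.symm
  have f4 : ¬(w = w * w ^ 2) := by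
    rw [show w * w ^ 2 = w ^ 3 by ring, hw3]; exact hw1
  have f5 : ¬(w ^ 2 = w * 1) := by rw [mul_one]; exact h2w
  have f6 : ¬(w ^ 2 = w * w ^ 2) := by
    rw [show w * w ^ 2 = w ^ 3 by ring, hw3]; exact h21
  have d1 : w / w ^ 2 = w ^ 2 := by
    rw [div_eq_iff (pow_ne_zero 2 h0)]; linear_combination -w * hw3
  have d2 : w ^ 2 / w = w := by rw [div_eq_iff h0]; ring
  have d3 : (1:ℂ) / w = w ^ 2 := by rw [div_eq_iff h0]; linear_combination -hw3
  have d4 : (1:ℂ) / w ^ 2 = w := by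
    rw [div_eq_iff (pow_ne_zero 2 h0)]; linear_combination -hw3
  rcases ha with ha | ha | ha <;> rcases hb with hb | hb | hb <;>
    rcases hc with hc | hc | hc <;> rcases hd with hd | hd | hd <;>
    first
      | exact absurd (ha.trans hb.symm) hab
      | exact absurd (hc.trans hd.symm) hcd
      | exact absurd (ha.trans hc.symm) hac
      | exact absurd (hb.trans hd.symm) hbd
      | (rw [ha, hb, hc, hd]
         simp only [if_neg f1, if_neg f2, if_neg f3, if_neg f4, if_neg f5, if_neg f6,
           if_pos t1, if_pos t2, if_pos t3, d1, d2, d3, d4, div_one]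
         all_goals first
           | ring1
           | linear_combination hw3
           | linear_combination w * hw3
           | linear_combination w ^ 2 * hw3
           | linear_combination -hw3
           | linear_combination -w * hw3)

/-- For two proper 3-colorings `u, v` of `C_{2m+1}` with colors in `{1, w, w²}` and
`uᵢ ≠ vᵢ` for all `i`, setting `εᵢ = uᵢ/u_{i-1}` and `δᵢ = vᵢ/v_{i-1}`, one has
`∏ᵢ (1 - εᵢ) = ∏ᵢ (1 - δᵢ)`. -/
theorem stmt17 (w : ℂ) (hw : w = Complex.exp (2 * Real.pi * I / 3))
    (m : ℕ) (hm : 1 ≤ m)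
    (u v : ZMod (2 * m + 1) → ℂ)
    (hu : ∀ i, u i = 1 ∨ u i = w ∨ u i = w ^ 2)
    (hv : ∀ i, v i = 1 ∨ v i = w ∨ v i = w ^ 2)
    (hup : ∀ i, u i ≠ u (i + 1))
    (hvp : ∀ i, v i ≠ v (i + 1))
    (huv : ∀ i, u i ≠ v i) :
    ∏ i : ZMod (2 * m + 1), (1 - u i / u (i - 1)) =
      ∏ i : ZMod (2 * m + 1), (1 - v i / v (i - 1)) := by
  have hp : IsPrimitiveRoot w 3 := by
    rw [hw]; simpa using Complex.isPrimitiveRoot_exp 3 (by norm_num)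
  have hw3 : w ^ 3 = 1 := hp.pow_eq_one
  have hw1 : w ≠ 1 := hp.ne_one (by norm_num)
  have h0 : w ≠ 0 := by rintro rfl; simp at hw3
  have key : ∀ i : ZMod (2 * m + 1),
      (1 - u i / u (i - 1)) * (if u (i - 1) = w * v (i - 1) then w ^ 2 else -w)
        = (1 - v i / v (i - 1)) * (if u i = w * v i then w ^ 2 else -w) := by
    intro i
    have e1 : i - 1 + 1 = i := by ring
    have hab : u i ≠ u (i - 1) := fun h => hup (i - 1) (by rw [e1]; exact h.symm)
    have hcd : v i ≠ v (i - 1) := fun h => hvp (i - 1) (by rw [e1]; exact h.symm)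
    exact key17 w (u i) (u (i - 1)) (v i) (v (i - 1)) hw3 hw1 (hu i) (hu (i - 1))
      (hv i) (hv (i - 1)) hab hcd (huv i) (huv (i - 1))
  have hGne : ∀ i : ZMod (2 * m + 1), (if u i = w * v i then w ^ 2 else -w) ≠ 0 := by
    intro i
    split_ifs
    · exact pow_ne_zero 2 h0
    · exact neg_ne_zero.mpr h0
  have hprod : (∏ i : ZMod (2 * m + 1), ((1 - u i / u (i - 1)) *
        (if u (i - 1) = w * v (i - 1) then w ^ 2 else -w)))
      = ∏ i : ZMod (2 * m + 1), ((1 - v i / v (i - 1)) *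
        (if u i = w * v i then w ^ 2 else -w)) :=
    Finset.prod_congr rfl fun i _ => key i
  rw [Finset.prod_mul_distrib, Finset.prod_mul_distrib] at hprod
  have hshift : (∏ i : ZMod (2 * m + 1), (if u (i - 1) = w * v (i - 1) then w ^ 2 else -w))
      = ∏ i : ZMod (2 * m + 1), (if u i = w * v i then w ^ 2 else -w) :=
    Fintype.prod_equiv (Equiv.subRight (1 : ZMod (2 * m + 1))) _ _ (fun i => rfl)
  rw [hshift] at hprod
  exact mul_right_cancel₀ (Finset.prod_ne_zero_iff.mpr fun i _ => hGne i) hprod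
end
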